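/- arXiv:2003.13108 — 11 statements merged into one kernel-verified Lean document; each statement's English description precedes it below -/
import Mathlib

section
/- The infinite graph G defined over the natural numbers, whose vertex set is V = {(a,b) ∈ ℕ² : a ≠ b} and whose edge relation is E((a,b),(c,d)) ⟺ (a = d ∧ b ≠ c) ∨ (a ≠ d ∧ b = c), is not 3-colorable: there is no function f : V → Fin 3 such that f(x) ≠ f(y) whenever E(x,y) holds. -/
theorem stmt_0 :
    ¬ ∃ f : {p : ℕ × ℕ // p.1 ≠ p.2} → Fin 3,
      ∀ x y : {p : ℕ × ℕ // p.1 ≠ p.2},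
        ((x.1.1 = y.1.2 ∧ x.1.2 ≠ y.1.1) ∨ (x.1.1 ≠ y.1.2 ∧ x.1.2 = y.1.1)) →
        f x ≠ f y := by
  rintro ⟨f, hf⟩
  set T : ℕ → Set (Fin 3) :=
    fun a => {k | ∃ c, ∃ h : a < c, f ⟨(a, c), Nat.ne_of_lt h⟩ = k} with hT
  -- injectivity on ordered pairs
  have key : ∀ a b : ℕ, a < b → T a ≠ T b := by
    intro a b hab hEq
    have hmem : f ⟨(a, b), Nat.ne_of_lt hab⟩ ∈ T a := ⟨b, hab, rfl⟩
    rw [hEq] at hmem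
    obtain ⟨c, hbc, hc⟩ := hmem
    have hedge : ((a = c ∧ b ≠ b) ∨ (a ≠ c ∧ b = b)) :=
      Or.inr ⟨Nat.ne_of_lt (hab.trans hbc), rfl⟩
    exact hf ⟨(a, b), Nat.ne_of_lt hab⟩ ⟨(b, c), Nat.ne_of_lt hbc⟩ hedge hc.symm
  have hinj : Function.Injective T := by
    intro a b h
    by_contra hne
    rcases lt_or_gt_of_ne hne with h1 | h1
    · exact key a b h1 h
    · exact key b a h1 h.symm
  obtain ⟨x, y, hxy, hmap⟩ := Finite.exists_ne_map_eq_of_infinite T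
  exact hxy (hinj hmap)
end

section
/- Already over a 5-element set the graph is not 3-colorable: letting V = {p : Fin 5 × Fin 5 // p.1 ≠ p.2} with edge relation E((a,b),(c,d)) ⟺ (a = d ∧ b ≠ c) ∨ (a ≠ d ∧ b = c), there is no function f : V → Fin 3 such that f(x) ≠ f(y) whenever E(x,y) holds. -/
/-!
A colour class, read as a set of arcs `(a, b)` of a digraph on `Fin 5`, contains no walk
`a → b → c` with `a ≠ c`, because `(a, b)` and `(b, c)` are adjacent. In such a digraph a vertex
with both in- and out-arcs has a single in-arc, and every arc into a vertex without out-arcs starts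
at a vertex without in-arcs. With `p`, `s`, `t` the numbers of vertices of these three kinds, there
are at most `p + s * t ≤ max n ⌊n² / 4⌋` arcs on `n` vertices: at most `6` when `n = 5`. So three
colour classes cover at most `18` of the `20` vertices.
-/

open Finset

lemma Nat.add_mul_le_max_of_add_add_le {p s t n : ℕ} (h : p + s + t ≤ n) :
    p + s * t ≤ max n (n ^ 2 / 4) := by
  rcases Nat.eq_zero_or_pos (s * t) with hst | hst
  · omega
  · obtain ⟨hs, ht⟩ := CanonicallyOrderedAdd.mul_pos.1 hst
    refine le_max_of_le_right ((Nat.le_div_iff_mul_le (by norm_num)).2 ?_)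
    nlinarith [sq_nonneg ((s : ℤ) - t)]

namespace Finset

variable {α : Type*} [DecidableEq α] {s : Finset (α × α)}

def IsBacktracking (s : Finset (α × α)) : Prop :=
  ∀ a b c, (a, b) ∈ s → (b, c) ∈ s → a = c

lemma IsBacktracking.card_filter_snd_mem_fst_le (hs : s.IsBacktracking) :
    #(s.filter (·.2 ∈ s.image Prod.fst)) ≤ #(s.image Prod.fst ∩ s.image Prod.snd) := by
  refine card_le_card_of_injOn Prod.snd (fun p hp => ?_) fun p hp q hq hpq => ?_
  · simp only [coe_filter] at hp
    exact mem_inter.2 ⟨hp.2, mem_image_of_mem _ hp.1⟩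
  · simp only [coe_filter, Set.mem_ofPred_eq, mem_image] at hp hq
    obtain ⟨⟨_, c⟩, hc, rfl⟩ := hp.2
    have hpq : p.2 = q.2 := hpq
    have hp₁ : p.1 = c := hs _ _ _ hp.1 hc
    have hq₁ : q.1 = c := hs _ _ _ hq.1 (hpq ▸ hc)
    exact Prod.ext (hp₁.trans hq₁.symm) hpq

lemma IsBacktracking.filter_snd_not_mem_fst_subset (hs : s.IsBacktracking) :
    s.filter (·.2 ∉ s.image Prod.fst) ⊆
      (s.image Prod.fst \ s.image Prod.snd) ×ˢ (s.image Prod.snd \ s.image Prod.fst) := by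
  rintro ⟨a, b⟩ hab
  obtain ⟨hab, hb⟩ := mem_filter.1 hab
  refine mem_product.2 ⟨mem_sdiff.2 ⟨mem_image_of_mem _ hab, ?_⟩,
    mem_sdiff.2 ⟨mem_image_of_mem _ hab, hb⟩⟩
  intro ha
  obtain ⟨⟨c, _⟩, hca, rfl⟩ := mem_image.1 ha
  obtain rfl : c = b := hs _ _ _ hca hab
  exact hb (mem_image_of_mem _ hca)

lemma IsBacktracking.card_le (hs : s.IsBacktracking) :
    #s ≤ #(s.image Prod.fst ∩ s.image Prod.snd) +
      #(s.image Prod.fst \ s.image Prod.snd) * #(s.image Prod.snd \ s.image Prod.fst) := by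
  rw [← card_filter_add_card_filter_not (s := s) (·.2 ∈ s.image Prod.fst), ← card_product]
  exact add_le_add hs.card_filter_snd_mem_fst_le (card_le_card hs.filter_snd_not_mem_fst_subset)

theorem IsBacktracking.card_le_max [Fintype α] (hs : s.IsBacktracking) :
    #s ≤ max (Fintype.card α) (Fintype.card α ^ 2 / 4) := by
  refine hs.card_le.trans (Nat.add_mul_le_max_of_add_add_le ?_)
  rw [card_inter_add_card_sdiff, ← card_union_of_disjoint disjoint_sdiff, union_sdiff_self_eq_union]
  exact card_le_univ _

end Finset

theorem stmt_1 :
    ¬ ∃ f : {p : Fin 5 × Fin 5 // p.1 ≠ p.2} → Fin 3,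
      ∀ x y : {p : Fin 5 × Fin 5 // p.1 ≠ p.2},
        ((x.1.1 = y.1.2 ∧ x.1.2 ≠ y.1.1) ∨ (x.1.1 ≠ y.1.2 ∧ x.1.2 = y.1.1)) →
        f x ≠ f y := by
  rintro ⟨f, hf⟩
  let colorClass (i : Fin 3) : Finset (Fin 5 × Fin 5) :=
    (univ.filter (f · = i)).map (Function.Embedding.subtype _)
  have hback (i : Fin 3) : (colorClass i).IsBacktracking := by
    intro a b c hab hbc
    simp only [colorClass, mem_map, mem_filter, mem_univ, true_and,
      Function.Embedding.coe_subtype] at hab hbc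
    obtain ⟨x, hx, hxab⟩ := hab
    obtain ⟨y, hy, hybc⟩ := hbc
    by_contra hac
    exact hf x y (Or.inr (by simp [hxab, hybc, hac])) (hx.trans hy.symm)
  have hcard : ∑ i : Fin 3, #(colorClass i) = Fintype.card {p : Fin 5 × Fin 5 // p.1 ≠ p.2} := by
    simp only [colorClass, card_map]
    exact (card_eq_sum_card_fiberwise fun _ _ => mem_univ _).symm
  have hle : ∑ i : Fin 3, #(colorClass i) ≤ ∑ _i : Fin 3, 6 :=
    sum_le_sum fun i _ => (hback i).card_le_max
  have h20 : Fintype.card {p : Fin 5 × Fin 5 // p.1 ≠ p.2} = 20 := rfl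
  simp only [hcard, h20, sum_const, card_univ, Fintype.card_fin, smul_eq_mul] at hle
  omega
end

section
/- Compactness for CSPs over a finite domain: let ι be an index type, n : ι → ℕ, let V be a set equipped with relations R_V i ⊆ V^(n i) for each i ∈ ι, and let D be a finite set equipped with relations R_D i ⊆ D^(n i). Then there exists a homomorphism f : V → D (i.e., for all i and x ∈ V^(n i), R_V i x implies R_D i (f ∘ x)) if and only if for every finite subset s ⊆ V there exists a function f₀ : V → D such that for all i and all tuples x ∈ V^(n i) with all coordinates in s, R_V i x implies R_D i (f₀ ∘ x). -/
theorem stmt_2 {ι V D : Type*} [Finite D] (n : ι → ℕ)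
    (RV : ∀ i, (Fin (n i) → V) → Prop) (RD : ∀ i, (Fin (n i) → D) → Prop) :
    (∃ f : V → D, ∀ i (x : Fin (n i) → V), RV i x → RD i (f ∘ x)) ↔
    (∀ s : Finset V, ∃ f₀ : V → D,
      ∀ i (x : Fin (n i) → V), (∀ k, x k ∈ s) → RV i x → RD i (f₀ ∘ x)) := by
  constructor
  · rintro ⟨f, hf⟩ s
    exact ⟨f, fun i x _ hx => hf i x hx⟩
  · intro h
    by_cases hV : IsEmpty V
    · obtain ⟨f₀, hf₀⟩ := h ∅
      exact ⟨f₀, fun i x hx => hf₀ i x (fun k => (hV.false (x k)).elim) hx⟩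
    rw [not_isEmpty_iff] at hV
    classical
    have hD : Nonempty D := by
      obtain ⟨f₀, _⟩ := h ∅
      exact ⟨f₀ hV.some⟩
    letI : TopologicalSpace D := ⊥
    haveI : DiscreteTopology D := ⟨rfl⟩
    haveI : CompactSpace D := Finite.compactSpace
    set C : Finset V → Set (V → D) :=
      fun s => {f | ∀ i (x : Fin (n i) → V), (∀ k, x k ∈ s) → RV i x → RD i (f ∘ x)}
      with hC
    have hclosed : ∀ s, IsClosed (C s) := by
      intro s
      have : C s = ⋂ (i) (x : Fin (n i) → V) (_ : ∀ k, x k ∈ s) (_ : RV i x),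
          (fun f : V → D => f ∘ x) ⁻¹' {g | RD i g} := by
        ext f; simp [hC, Set.mem_iInter]
      rw [this]
      refine isClosed_iInter fun i => isClosed_iInter fun x =>
        isClosed_iInter fun _ => isClosed_iInter fun _ => ?_
      exact (isClosed_discrete _).preimage (by continuity)
    have hne : ∀ s, (C s).Nonempty := fun s => h s
    have hcpt : ∀ s, IsCompact (C s) := fun s => (hclosed s).isCompact
    have hdir : Directed (· ⊇ ·) C := by
      intro s t
      refine ⟨s ∪ t, fun f hf i x hx hRV => hf i x (fun k => ?_) hRV,
        fun f hf i x hx hRV => hf i x (fun k => ?_) hRV⟩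
      · exact Finset.mem_union_left _ (hx k)
      · exact Finset.mem_union_right _ (hx k)
    obtain ⟨f, hf⟩ := IsCompact.nonempty_iInter_of_directed_nonempty_isCompact_isClosed
      C hdir hne hcpt hclosed
    refine ⟨f, fun i x hx => ?_⟩
    have := Set.mem_iInter.mp hf (Finset.image x Finset.univ)
    exact this i x (fun k => Finset.mem_image_of_mem x (Finset.mem_univ k)) hx
end

section
/- Let G be an extremely amenable topological group. Let V be a set with a G-action all of whose point stabilizers are open, let ι index relations R_V i ⊆ V^(n i) that are G-invariant (R_V i x implies R_V i (g • x) for all g ∈ G), and let D be a finite set with relations R_D i ⊆ D^(n i). If there exists a homomorphism from (V, R_V) to (D, R_D), then there exists a G-equivariant homomorphism h, i.e., one satisfying h(g • v) = h(v) for all g ∈ G and v ∈ V. -/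
/-!
The homomorphisms `V → D` form a closed, hence compact, subset of the product `D ^ V` of finite
discrete spaces, and `G` acts on them by `(g • f) v = f (g⁻¹ • v)`. Since stabilizers are open,
`g ↦ g⁻¹ • v` is locally constant, so each coordinate of this action depends continuously on
`(g, f)`. Extreme amenability then yields a fixed homomorphism, which is exactly an equivariant one.
-/

universe u v w x

/-- A topological group is extremely amenable if every continuous action of it on a
nonempty compact Hausdorff space has a fixed point. -/
def ExtremelyAmenable (G : Type u) [Group G] [TopologicalSpace G] : Prop :=
  ∀ (X : Type v) [TopologicalSpace X] [CompactSpace X] [T2Space X] [Nonempty X]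
    [MulAction G X], Continuous (fun p : G × X => p.1 • p.2) →
    ∃ x : X, ∀ g : G, g • x = x

open Topology

attribute [local instance] arrowAction

def IsRelHom {ι V D : Type*} {n : ι → ℕ} (RV : ∀ i, (Fin (n i) → V) → Prop)
    (RD : ∀ i, (Fin (n i) → D) → Prop) (f : V → D) : Prop :=
  ∀ i (x : Fin (n i) → V), RV i x → RD i (f ∘ x)

section RelHom

variable {ι V D : Type*} {n : ι → ℕ} (RV : ∀ i, (Fin (n i) → V) → Prop)
  (RD : ∀ i, (Fin (n i) → D) → Prop)

theorem isClosed_setOf_isRelHom [TopologicalSpace D] (hRD : ∀ i, IsClosed {y | RD i y}) :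
    IsClosed {f : V → D | IsRelHom RV RD f} := by
  simp only [IsRelHom, Set.ofPred_forall]
  exact isClosed_iInter fun i => isClosed_iInter fun x => isClosed_iInter fun _ =>
    (hRD i).preimage (continuous_pi fun k => continuous_apply (x k))

theorem compactSpace_isRelHom [TopologicalSpace D] [CompactSpace D]
    (hRD : ∀ i, IsClosed {y | RD i y}) : CompactSpace {f : V → D // IsRelHom RV RD f} :=
  isCompact_iff_compactSpace.mp (isClosed_setOf_isRelHom RV RD hRD).isCompact

def relHomSubMulAction (G : Type*) [Group G] [MulAction G V]
    (hinv : ∀ i (x : Fin (n i) → V) (g : G), RV i x → RV i (fun k => g • x k)) :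
    SubMulAction G (V → D) where
  carrier := {f | IsRelHom RV RD f}
  smul_mem' g _ hf i x hx := hf i (fun k => g⁻¹ • x k) (hinv i x g⁻¹ hx)

end RelHom

section ArrowAction

variable {G V : Type*} [Group G] [TopologicalSpace G] [MulAction G V]

theorem isLocallyConstant_smul_of_isOpen_stabilizer [ContinuousMul G]
    (hstab : ∀ v : V, IsOpen {g : G | g • v = v}) (v : V) :
    IsLocallyConstant fun g : G => g • v := by
  refine IsLocallyConstant.iff_isOpen_fiber_apply.mpr fun g₀ => ?_
  have hfiber : (fun g : G => g • v) ⁻¹' {g₀ • v} = (fun g => g₀⁻¹ * g) ⁻¹' {g | g • v = v} := by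
    ext g
    simp [mul_smul, inv_smul_eq_iff]
  rw [hfiber]
  exact (hstab v).preimage (continuous_const_mul g₀⁻¹)

theorem continuousSMul_arrowAction_of_isOpen_stabilizer [IsTopologicalGroup G]
    (D : Type*) [TopologicalSpace D] (hstab : ∀ v : V, IsOpen {g : G | g • v = v}) :
    ContinuousSMul G (V → D) := by
  refine ⟨continuous_pi fun v => continuous_iff_continuousAt.mpr fun p => ?_⟩
  have hconst : ∀ᶠ q : G × (V → D) in 𝓝 p, q.1⁻¹ • v = p.1⁻¹ • v :=
    continuousAt_fst.eventually <|
      ((isLocallyConstant_smul_of_isOpen_stabilizer hstab v).comp_continuous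
        continuous_inv).eventually_eq p.1
  exact ((continuous_apply (p.1⁻¹ • v)).comp continuous_snd).continuousAt.congr
    (hconst.mono fun q hq => congrArg q.2 hq.symm)

end ArrowAction

theorem stmt_7 {G : Type u} {V : Type v} {D : Type w} {ι : Type x}
    [Group G] [TopologicalSpace G] [IsTopologicalGroup G]
    (hEA : ExtremelyAmenable.{u, max v w} G)
    [MulAction G V] (hstab : ∀ v : V, IsOpen {g : G | g • v = v})
    [Finite D] (n : ι → ℕ)
    (RV : ∀ i, (Fin (n i) → V) → Prop) (RD : ∀ i, (Fin (n i) → D) → Prop)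
    (hinv : ∀ i (x : Fin (n i) → V) (g : G), RV i x → RV i (fun k => g • x k))
    (hsol : ∃ f : V → D, ∀ i (x : Fin (n i) → V), RV i x → RD i (f ∘ x)) :
    ∃ h : V → D, (∀ i (x : Fin (n i) → V), RV i x → RD i (h ∘ x)) ∧
      ∀ (g : G) (v : V), h (g • v) = h v := by
  let _ : TopologicalSpace D := ⊥
  have : DiscreteTopology D := ⟨rfl⟩
  have := continuousSMul_arrowAction_of_isOpen_stabilizer D hstab
  let X := relHomSubMulAction RV RD G hinv
  obtain ⟨f, hf⟩ := hsol
  have : Nonempty X := ⟨⟨f, hf⟩⟩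
  have : CompactSpace X := compactSpace_isRelHom RV RD fun i => isClosed_discrete _
  obtain ⟨h, hfix⟩ := hEA X continuous_smul
  refine ⟨h, h.2, fun g v => ?_⟩
  have hfix_v : h.1 (g⁻¹⁻¹ • v) = h.1 v := congrFun (congrArg Subtype.val (hfix g⁻¹)) v
  rwa [inv_inv] at hfix_v
end

section
/- Equivariant CSP over the ordered rationals: let G = Aut(ℚ,<) be the group of order-isomorphisms of ℚ with the topology of pointwise convergence. Let V be a set with a G-action all of whose point stabilizers are open, let ι index relations R_V i ⊆ V^(n i) that are G-invariant, and let D be a finite set with relations R_D i ⊆ D^(n i). If there exists a homomorphism from (V, R_V) to (D, R_D), then there exists a G-equivariant homomorphism h, i.e., one satisfying h(g • v) = h(v) for all g ∈ G and v ∈ V. -/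
/-!
An open stabilizer contains the pointwise stabilizer of a finite set `S ⊆ ℚ`, and an order
isomorphism is determined on a finite set by its image; hence `γ • v` depends only on `γ '' S`.
For a fixed homomorphism `f`, the map `γ '' S ↦ f (γ • v)` is therefore a finite colouring of the
`|S|`-subsets of `ℚ`. By the infinite Ramsey theorem finitely many such colourings are constant on
the subsets of one infinite set `B`, and by homogeneity of `ℚ` some `γ` moves all the supports
involved into `B`; then `f ∘ (γ • ·)` is a homomorphism identifying `g • v` with `v` for finitely
many prescribed pairs `(g, v)`. Compactness of `V → D` turns this into full equivariance.
-/

theorem StrictMono.eqOn_of_image_eq {α β : Type*} [LinearOrder α] [Preorder β] {f g : α → β}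
    (hf : StrictMono f) (hg : StrictMono g) {s : Set α} (hs : s.Finite) (h : f '' s = g '' s) :
    s.EqOn f g := by
  have : Finite s := hs
  have hfg : f ∘ ((↑) : s → α) = g ∘ ((↑) : s → α) :=
    ((hf.comp (Subtype.strictMono_coe (· ∈ s))).range_inj
      (hg.comp (Subtype.strictMono_coe (· ∈ s)))).1
        (by simpa only [Set.range_comp, Subtype.range_coe] using h)
  exact fun x hx => congrFun hfg ⟨x, hx⟩

namespace Order.PartialIso

variable {α β : Type*} [LinearOrder α] [LinearOrder β]
  [Countable α] [DenselyOrdered α] [NoMinOrder α] [NoMaxOrder α] [Nonempty α]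
  [Countable β] [DenselyOrdered β] [NoMinOrder β] [NoMaxOrder β] [Nonempty β]

theorem exists_orderIso_extends (f₀ : PartialIso α β) :
    ∃ γ : α ≃o β, ∀ p ∈ f₀.val, γ p.1 = p.2 := by
  cases nonempty_encodable α
  cases nonempty_encodable β
  let to_cofinal : α ⊕ β → Cofinal (PartialIso α β) := fun p ↦
    Sum.recOn p (definedAtLeft β) (definedAtRight α)
  let I : Ideal (PartialIso α β) := idealOfCofinals f₀ to_cofinal
  let F a := funOfIdeal a I (cofinal_meets_idealOfCofinals _ to_cofinal (Sum.inl a))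
  let G b := invOfIdeal b I (cofinal_meets_idealOfCofinals _ to_cofinal (Sum.inr b))
  refine ⟨OrderIso.ofCmpEqCmp (fun a ↦ (F a).val) (fun b ↦ (G b).val) fun a b ↦ ?_, ?_⟩
  · obtain ⟨f, hf, ha⟩ := (F a).prop
    obtain ⟨g, hg, hb⟩ := (G b).prop
    obtain ⟨m, -, fm, gm⟩ := I.directed _ hf _ hg
    exact m.prop (a, _) (fm ha) (_, b) (gm hb)
  · rintro ⟨a, b⟩ hab
    obtain ⟨f, hf, ha⟩ := (F a).prop
    obtain ⟨m, -, fm, f₀m⟩ := I.directed _ hf _ (mem_idealOfCofinals f₀ to_cofinal)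
    have := m.prop _ (fm ha) _ (f₀m hab)
    rw [cmp_self_eq_eq, eq_comm, cmp_eq_eq_iff] at this
    exact this

end Order.PartialIso

theorem exists_orderIso_image_eq {α β : Type*} [LinearOrder α] [LinearOrder β]
    [Countable α] [DenselyOrdered α] [NoMinOrder α] [NoMaxOrder α] [Nonempty α]
    [Countable β] [DenselyOrdered β] [NoMinOrder β] [NoMaxOrder β] [Nonempty β]
    (S : Finset α) (T : Finset β) (h : S.card = T.card) :
    ∃ γ : α ≃o β, S.image γ = T := by
  let eS := S.orderEmbOfFin rfl
  let eT := T.orderEmbOfFin h.symm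
  let f₀ : Order.PartialIso α β := ⟨Finset.univ.image fun i ↦ (eS i, eT i), by
    simp only [Finset.mem_image, Finset.mem_univ, true_and]
    rintro _ ⟨i, rfl⟩ _ ⟨j, rfl⟩
    rw [eS.strictMono.cmp_map_eq, eT.strictMono.cmp_map_eq]⟩
  obtain ⟨γ, hγ⟩ := f₀.exists_orderIso_extends
  refine ⟨γ, ?_⟩
  have hγe : ∀ i, γ (eS i) = eT i := fun i ↦ hγ _ (Finset.mem_image_of_mem _ (Finset.mem_univ i))
  rw [← S.image_orderEmbOfFin_univ rfl, ← T.image_orderEmbOfFin_univ h.symm, Finset.image_image]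
  exact Finset.image_congr fun i _ ↦ hγe i

theorem Set.Infinite.exists_monochromatic_subset {D : Type*} [Finite D] (k : ℕ)
    (c : Finset ℕ → D) {A : Set ℕ} (hA : A.Infinite) :
    ∃ B ⊆ A, B.Infinite ∧ ∃ d, ∀ s : Finset ℕ, ↑s ⊆ B → s.card = k → c s = d := by
  induction k generalizing c A with
  | zero => exact ⟨A, subset_rfl, hA, c ∅, fun s _ hs ↦ by rw [Finset.card_eq_zero.1 hs]⟩
  | succ k ih =>
    have exists_cone : ∀ A : {A : Set ℕ // A.Infinite}, ∃ a : ℕ, ∃ B : {B : Set ℕ // B.Infinite},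
        ∃ d : D, a ∈ A.1 ∧ B.1 ⊆ A.1 ∧ (∀ x ∈ B.1, a < x) ∧
          ∀ s : Finset ℕ, ↑s ⊆ B.1 → s.card = k → c (insert a s) = d := by
      rintro ⟨A, hA⟩
      obtain ⟨a, ha⟩ := hA.nonempty
      obtain ⟨B, hBA, hB, d, hd⟩ := ih (fun s ↦ c (insert a s)) (hA.sdiff (Set.finite_Iic a))
      exact ⟨a, ⟨B, hB⟩, d, ha, fun x hx ↦ (hBA hx).1, fun x hx ↦ not_le.1 (hBA hx).2, hd⟩
    choose a B d ha hBA hlt hd using exists_cone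
    let A' : ℕ → {A : Set ℕ // A.Infinite} := fun m ↦ B^[m] ⟨A, hA⟩
    have A'_succ : ∀ m, A' (m + 1) = B (A' m) := fun m ↦ Function.iterate_succ_apply' B m _
    have A'_anti : Antitone fun m ↦ (A' m).1 :=
      antitone_nat_of_succ_le fun m ↦ by rw [A'_succ]; exact hBA _
    let x : ℕ → ℕ := fun m ↦ a (A' m)
    have x_mem : ∀ m, x m ∈ (A' m).1 := fun m ↦ ha _
    have x_mono : StrictMono x :=
      strictMono_nat_of_lt_succ fun m ↦ hlt _ _ (A'_succ m ▸ x_mem (m + 1))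
    obtain ⟨d₀, hd₀⟩ := Finite.exists_infinite_fiber fun m ↦ d (A' m)
    refine ⟨x '' ((fun m ↦ d (A' m)) ⁻¹' {d₀}), ?_,
      (Set.infinite_coe_iff.1 hd₀).image x_mono.injective.injOn, d₀, fun s hs hcard ↦ ?_⟩
    · rintro _ ⟨m, -, rfl⟩
      exact A'_anti (Nat.zero_le m) (x_mem m)
    -- `s` is the insertion of its least element `x m` into a `k`-subset of `B (A' m)`
    have hne : s.Nonempty := Finset.card_pos.1 (by omega)
    obtain ⟨m, hm, hmin⟩ := hs (s.min'_mem hne)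
    have hxm : x m ∈ s := hmin ▸ s.min'_mem hne
    have hrest : ↑(s.erase (x m)) ⊆ (B (A' m)).1 := by
      intro y hy
      obtain ⟨hyne, hys⟩ := Finset.mem_erase.1 hy
      obtain ⟨m', -, rfl⟩ := hs hys
      have hmm' : m < m' :=
        x_mono.lt_iff_lt.1 (lt_of_le_of_ne (hmin ▸ s.min'_le _ hys) (Ne.symm hyne))
      exact A'_succ m ▸ A'_anti hmm' (x_mem m')
    rw [← Finset.insert_erase hxm,
      hd _ _ hrest (by rw [Finset.card_erase_of_mem hxm, hcard, Nat.add_sub_cancel])]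
    exact hm

theorem Set.Infinite.exists_monochromatic_subset_finset {D κ : Type*} [Finite D] (J : Finset κ)
    (k : κ → ℕ) (c : κ → Finset ℕ → D) {A : Set ℕ} (hA : A.Infinite) :
    ∃ B ⊆ A, B.Infinite ∧
      ∀ j ∈ J, ∃ d, ∀ s : Finset ℕ, ↑s ⊆ B → s.card = k j → c j s = d := by
  classical
  induction J using Finset.induction_on with
  | empty => exact ⟨A, subset_rfl, hA, by simp⟩
  | insert j J _ ih =>
    obtain ⟨B, hBA, hB, hJ⟩ := ih
    obtain ⟨B', hB'B, hB', d, hd⟩ := hB.exists_monochromatic_subset (k j) (c j)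
    refine ⟨B', hB'B.trans hBA, hB', fun j' hj' ↦ ?_⟩
    rcases Finset.mem_insert.1 hj' with rfl | hj'
    · exact ⟨d, hd⟩
    · obtain ⟨d', hd'⟩ := hJ j' hj'
      exact ⟨d', fun s hs ↦ hd' s (hs.trans hB'B)⟩

theorem exists_orderIso_forall_mem_apply_smul_smul_eq {V D : Type*} [MulAction (ℚ ≃o ℚ) V]
    [Finite D]
    (hsupp : ∀ v : V, ∃ S : Finset ℚ, ∀ γ γ' : ℚ ≃o ℚ, S.image γ = S.image γ' → γ • v = γ' • v)
    (f : V → D) (s : Finset ((ℚ ≃o ℚ) × V)) :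
    ∃ γ : ℚ ≃o ℚ, ∀ p ∈ s, f (γ • p.1 • p.2) = f (γ • p.2) := by
  classical
  choose S hS using hsupp
  -- colour `u` by the value of `f` at a translate of `p.2` whose support is moved onto `u`
  let c : (ℚ ≃o ℚ) × V → Finset ℕ → D := fun p u ↦
    f ((Classical.epsilon fun σ : ℚ ≃o ℚ ↦ (S p.2).image σ = u.image (↑)) • p.2)
  obtain ⟨B, -, hB, hc⟩ :=
    Set.infinite_univ.exists_monochromatic_subset_finset s (fun p ↦ (S p.2).card) c
  have hconst : ∀ p ∈ s, ∃ d, ∀ γ : ℚ ≃o ℚ,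
      ((S p.2).image γ : Set ℚ) ⊆ ((↑) : ℕ → ℚ) '' B → f (γ • p.2) = d := by
    intro p hp
    obtain ⟨d, hd⟩ := hc p hp
    refine ⟨d, fun γ hγ ↦ ?_⟩
    obtain ⟨u, huB, hu⟩ := Finset.subset_set_image_iff.1 hγ
    have hcard : u.card = (S p.2).card := by
      rw [← Finset.card_image_of_injective u (Nat.cast_injective (R := ℚ)), hu,
        Finset.card_image_of_injective _ γ.injective]
    rw [← hd u huB hcard]
    have hε := Classical.epsilon_spec (p := fun σ : ℚ ≃o ℚ ↦ (S p.2).image σ = u.image (↑))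
      ⟨γ, hu.symm⟩
    exact congrArg f (hS _ _ _ (hu.symm.trans hε.symm))
  let S₀ := s.biUnion fun p ↦ S p.2 ∪ (S p.2).image p.1
  obtain ⟨T, hTB, hTcard⟩ :=
    (hB.image (Nat.cast_injective (R := ℚ)).injOn).exists_subset_card_eq S₀.card
  obtain ⟨γ, hγ⟩ := exists_orderIso_image_eq S₀ T hTcard.symm
  have hγB : ∀ U ⊆ S₀, (U.image γ : Set ℚ) ⊆ ((↑) : ℕ → ℚ) '' B := fun U hU ↦
    subset_trans (by rw [← hγ]; exact Finset.coe_subset.2 (Finset.image_subset_image hU)) hTB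
  refine ⟨γ, fun p hp ↦ ?_⟩
  obtain ⟨d, hd⟩ := hconst p hp
  have hSp : S p.2 ∪ (S p.2).image p.1 ⊆ S₀ :=
    Finset.subset_biUnion_of_mem (fun p ↦ S p.2 ∪ (S p.2).image p.1) hp
  rw [smul_smul, hd γ (hγB _ (Finset.union_subset_left hSp)), hd]
  rw [RelIso.coe_mul, ← Finset.image_image]
  exact hγB _ (Finset.union_subset_right hSp)

def IsCSPHom {ι V D : Type*} {n : ι → ℕ} (RV : ∀ i, (Fin (n i) → V) → Prop)
    (RD : ∀ i, (Fin (n i) → D) → Prop) (h : V → D) : Prop :=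
  ∀ i (x : Fin (n i) → V), RV i x → RD i (h ∘ x)

theorem exists_isCSPHom_forall_eq_of_forall_finset {ι V D κ : Type*} [Finite D] {n : ι → ℕ}
    {RV : ∀ i, (Fin (n i) → V) → Prop} {RD : ∀ i, (Fin (n i) → D) → Prop} (E : κ → V × V)
    (hfin : ∀ s : Finset κ, ∃ h, IsCSPHom RV RD h ∧ ∀ k ∈ s, h (E k).1 = h (E k).2) :
    ∃ h, IsCSPHom RV RD h ∧ ∀ k, h (E k).1 = h (E k).2 := by
  let : TopologicalSpace D := ⊥
  have : DiscreteTopology D := ⟨rfl⟩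
  have hhom : IsClosed {h : V → D | IsCSPHom RV RD h} := by
    have : {h : V → D | IsCSPHom RV RD h} =
        ⋂ (i) (x : Fin (n i) → V), (fun h : V → D ↦ h ∘ x) ⁻¹' {y | RV i x → RD i y} := by
      ext; simp [IsCSPHom]
    rw [this]
    exact isClosed_iInter fun i ↦ isClosed_iInter fun x ↦
      (isClosed_discrete _).preimage (continuous_pi fun j ↦ continuous_apply (x j))
  obtain ⟨h, hh, hE⟩ := hhom.isCompact.inter_iInter_nonempty
    (fun k ↦ {h : V → D | h (E k).1 = h (E k).2})
    (fun k ↦ isClosed_eq (continuous_apply _) (continuous_apply _))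
    fun s ↦ by simpa [Set.nonempty_def] using hfin s
  exact ⟨h, hh, Set.mem_iInter.1 hE⟩

/-- The topology of pointwise convergence on the group `ℚ ≃o ℚ` of order-isomorphisms
of the rationals: the topology induced from the product topology on `ℚ → ℚ`,
with `ℚ` discrete. -/
instance rankTop : TopologicalSpace (ℚ ≃o ℚ) :=
  TopologicalSpace.induced (fun g : ℚ ≃o ℚ => (g : ℚ → ℚ))
    (@Pi.topologicalSpace ℚ (fun _ => ℚ) (fun _ => ⊥))

theorem exists_finset_forall_apply_eq_self_mem_of_isOpen {U : Set (ℚ ≃o ℚ)} (hU : IsOpen U)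
    (h1 : 1 ∈ U) : ∃ S : Finset ℚ, ∀ g : ℚ ≃o ℚ, (∀ q ∈ S, g q = q) → g ∈ U := by
  obtain ⟨t, ht, rfl⟩ :=
    (@isOpen_induced_iff _ _ (@Pi.topologicalSpace ℚ (fun _ ↦ ℚ) (fun _ ↦ ⊥)) _ _).1 hU
  obtain ⟨I, u, hu, hIu⟩ := (@isOpen_pi_iff ℚ (fun _ ↦ ℚ) (fun _ ↦ ⊥) t).1 ht _ h1
  refine ⟨I, fun g hg ↦ hIu fun q hq ↦ ?_⟩
  change g q ∈ u q
  rw [hg q hq]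
  exact (hu q hq).2

theorem exists_finset_smul_eq_smul_of_image_eq {V : Type*} [MulAction (ℚ ≃o ℚ) V] {v : V}
    (hv : IsOpen {g : ℚ ≃o ℚ | g • v = v}) :
    ∃ S : Finset ℚ, ∀ γ γ' : ℚ ≃o ℚ, S.image γ = S.image γ' → γ • v = γ' • v := by
  obtain ⟨S, hS⟩ := exists_finset_forall_apply_eq_self_mem_of_isOpen hv (one_smul _ v)
  refine ⟨S, fun γ γ' h ↦ ?_⟩
  have heq := γ.strictMono.eqOn_of_image_eq γ'.strictMono S.finite_toSet
    (by simpa only [Finset.coe_image] using congrArg ((↑) : Finset ℚ → Set ℚ) h)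
  have hfix : (γ'⁻¹ * γ) • v = v := hS _ fun q hq ↦ by simp [heq hq]
  rwa [mul_smul, inv_smul_eq_iff] at hfix

theorem stmt_8 {V D ι : Type*} [MulAction (ℚ ≃o ℚ) V] [Finite D]
    (hstab : ∀ v : V, IsOpen {g : ℚ ≃o ℚ | g • v = v})
    (n : ι → ℕ) (RV : ∀ i, (Fin (n i) → V) → Prop) (RD : ∀ i, (Fin (n i) → D) → Prop)
    (hinv : ∀ i (x : Fin (n i) → V) (g : ℚ ≃o ℚ), RV i x → RV i (fun k => g • x k))
    (hsol : ∃ f : V → D, ∀ i (x : Fin (n i) → V), RV i x → RD i (f ∘ x)) :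
    ∃ h : V → D, (∀ i (x : Fin (n i) → V), RV i x → RD i (h ∘ x)) ∧
      ∀ (g : ℚ ≃o ℚ) (v : V), h (g • v) = h v := by
  obtain ⟨f, hf⟩ := hsol
  have hsupp := fun v ↦ exists_finset_smul_eq_smul_of_image_eq (hstab v)
  obtain ⟨h, hh, hE⟩ := exists_isCSPHom_forall_eq_of_forall_finset (RV := RV) (RD := RD)
    (fun p : (ℚ ≃o ℚ) × V ↦ (p.1 • p.2, p.2)) fun s ↦ by
      obtain ⟨γ, hγ⟩ := exists_orderIso_forall_mem_apply_smul_smul_eq hsupp f s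
      exact ⟨fun v ↦ f (γ • v), fun i x hx ↦ hf i _ (hinv i x γ hx), hγ⟩
  exact ⟨h, hh, fun g v ↦ hE (g, v)⟩
end

section
/- Reduction from compact objects to arbitrary objects: let G be a group acting on a set V, let ι index relations R_V i ⊆ V^(n i) that are G-invariant, and let D be a finite set with relations R_D i ⊆ D^(n i). Suppose that for every G-invariant subset W ⊆ V that is a union of finitely many G-orbits there exists a G-equivariant homomorphism from (W, R_V restricted to W) to (D, R_D). Then there exists a G-equivariant homomorphism from (V, R_V) to (D, R_D). -/
theorem stmt_9 {G V D ι : Type*} [Group G] [MulAction G V] [Finite D]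
    (n : ι → ℕ) (RV : ∀ i, (Fin (n i) → V) → Prop) (RD : ∀ i, (Fin (n i) → D) → Prop)
    (hinv : ∀ i (x : Fin (n i) → V) (g : G), RV i x → RV i (fun k => g • x k))
    (hloc : ∀ F : Finset V, ∃ f : V → D,
      (∀ i (x : Fin (n i) → V), (∀ k, x k ∈ ⋃ v ∈ F, MulAction.orbit G v) →
        RV i x → RD i (f ∘ x)) ∧
      (∀ (g : G) (v : V), v ∈ ⋃ v' ∈ F, MulAction.orbit G v' → f (g • v) = f v)) :
    ∃ h : V → D, (∀ i (x : Fin (n i) → V), RV i x → RD i (h ∘ x)) ∧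
      ∀ (g : G) (v : V), h (g • v) = h v := by
  classical
  letI : TopologicalSpace D := ⊥
  haveI : DiscreteTopology D := ⟨rfl⟩
  haveI : CompactSpace D := Finite.compactSpace
  set t : Finset V → Set (V → D) := fun F =>
    {f | (∀ i (x : Fin (n i) → V), (∀ k, x k ∈ ⋃ v ∈ F, MulAction.orbit G v) →
        RV i x → RD i (f ∘ x)) ∧
      (∀ (g : G) (v : V), v ∈ ⋃ v' ∈ F, MulAction.orbit G v' → f (g • v) = f v)} with ht
  have hmono : ∀ {F F' : Finset V}, F ⊆ F' → t F' ⊆ t F := by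
    intro F F' hFF f hf
    have hsub : (⋃ v ∈ F, MulAction.orbit G v) ⊆ ⋃ v ∈ F', MulAction.orbit G v := by
      apply Set.iUnion₂_subset
      intro v hv
      exact Set.subset_iUnion₂ (s := fun v _ => MulAction.orbit G v) v (hFF hv)
    exact ⟨fun i x hx hRV => hf.1 i x (fun k => hsub (hx k)) hRV,
      fun g v hv => hf.2 g v (hsub hv)⟩
  have hclosed : ∀ F, IsClosed (t F) := by
    intro F
    have h1 : IsClosed {f : V → D | ∀ i (x : Fin (n i) → V),
        (∀ k, x k ∈ ⋃ v ∈ F, MulAction.orbit G v) → RV i x → RD i (f ∘ x)} := by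
      have : {f : V → D | ∀ i (x : Fin (n i) → V),
          (∀ k, x k ∈ ⋃ v ∈ F, MulAction.orbit G v) → RV i x → RD i (f ∘ x)} =
          ⋂ i, ⋂ x : Fin (n i) → V,
            ⋂ _ : (∀ k, x k ∈ ⋃ v ∈ F, MulAction.orbit G v), ⋂ _ : RV i x,
              (fun f : V → D => f ∘ x) ⁻¹' {y | RD i y} := by
        ext f; simp [Set.mem_iInter]
      rw [this]
      refine isClosed_iInter fun i => isClosed_iInter fun x => isClosed_iInter fun _ =>
        isClosed_iInter fun _ => IsClosed.preimage ?_ ?_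
      · exact continuous_pi fun k => continuous_apply (x k)
      · exact isClosed_discrete _
    have h2 : IsClosed {f : V → D | ∀ (g : G) (v : V),
        v ∈ ⋃ v' ∈ F, MulAction.orbit G v' → f (g • v) = f v} := by
      have : {f : V → D | ∀ (g : G) (v : V),
          v ∈ ⋃ v' ∈ F, MulAction.orbit G v' → f (g • v) = f v} =
          ⋂ g : G, ⋂ v : V, ⋂ _ : v ∈ ⋃ v' ∈ F, MulAction.orbit G v',
            {f : V → D | f (g • v) = f v} := by
        ext f; simp [Set.mem_iInter]; tauto
      rw [this]
      refine isClosed_iInter fun g => isClosed_iInter fun v => isClosed_iInter fun _ =>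
        isClosed_eq (continuous_apply _) (continuous_apply _)
    exact h1.inter h2
  have hne : ∀ F, (t F).Nonempty := by
    intro F
    obtain ⟨f, h1, h2⟩ := hloc F
    exact ⟨f, h1, h2⟩
  have hdir : Directed (· ⊇ ·) t := fun F F' =>
    ⟨F ∪ F', hmono Finset.subset_union_left, hmono Finset.subset_union_right⟩
  obtain ⟨h, hh⟩ := IsCompact.nonempty_iInter_of_directed_nonempty_isCompact_isClosed
    t hdir hne (fun F => (hclosed F).isCompact) hclosed
  refine ⟨h, ?_, ?_⟩
  · intro i x hRV
    have hm := (Set.mem_iInter.mp hh (Finset.image x Finset.univ)).1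
    refine hm i x (fun k => ?_) hRV
    exact Set.mem_biUnion (Finset.mem_image_of_mem x (Finset.mem_univ k))
      (MulAction.mem_orbit_self (x k))
  · intro g v
    have hm := (Set.mem_iInter.mp hh {v}).2
    exact hm g v (Set.mem_biUnion (Finset.mem_singleton_self v) (MulAction.mem_orbit_self v))
end

section
/- Equivariant CSP implies equivariant BPIT: let G be a topological group, and assume the following CSP principle holds for G: for every index type ι, arities n : ι → ℕ, every set V with a G-action whose point stabilizers are open and with G-invariant relations R_V i ⊆ V^(n i), and every finite set D with relations R_D i ⊆ D^(n i), if for every finite s ⊆ V there is a function f₀ : V → D preserving all constraints among tuples with coordinates in s, then there is a G-equivariant homomorphism from (V, R_V) to (D, R_D). Then every nontrivial G-Boolean algebra B admits a G-invariant prime ideal. -/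
/-!
Prime ideals of a Boolean algebra `B` are exactly the homomorphisms from a structure on `B`
(the relations `x ≤ y`, `z = x ⊔ y`, `x = ⊤`, `y = xᶜ`) to a two-element structure, read as
membership in the ideal. These relations are invariant under an action by Boolean-algebra
automorphisms, and the instance is satisfiable as a whole by any prime ideal (which exists since
`B` is nontrivial), so the CSP principle yields an equivariant homomorphism, i.e. a `G`-invariant
prime ideal.
-/

universe u v

def BoundedLatticeHom.ofMapInfMapCompl {α β : Type*} [BooleanAlgebra α] [BooleanAlgebra β]
    (f : α → β) (map_inf : ∀ a b, f (a ⊓ b) = f a ⊓ f b) (map_compl : ∀ a, f aᶜ = (f a)ᶜ) :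
    BoundedLatticeHom α β :=
  have map_bot : f ⊥ = ⊥ := by
    rw [← inf_compl_eq_bot (a := (⊥ : α)), map_inf, map_compl, inf_compl_eq_bot]
  { toFun := f
    map_inf' := map_inf
    map_sup' := fun a b => by
      rw [← compl_compl (a ⊔ b), compl_sup, map_compl, map_inf, map_compl, map_compl,
        compl_inf, compl_compl, compl_compl]
    map_top' := by rw [← compl_bot, map_compl, map_bot, compl_bot]
    map_bot' := map_bot }

inductive PrimeIdealSymbol : Type v
  | le | sup | top | compl

namespace PrimeIdealSymbol

abbrev arity : PrimeIdealSymbol.{v} → ℕ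
  | le => 2
  | sup => 3
  | top => 1
  | compl => 2

def rel {B : Type*} [BooleanAlgebra B] : ∀ i : PrimeIdealSymbol.{v}, (Fin i.arity → B) → Prop
  | le, x => x 0 ≤ x 1
  | sup, x => x 2 = x 0 ⊔ x 1
  | top, x => x 0 = ⊤
  | compl, x => x 1 = (x 0)ᶜ

/-- The target structure: a point `p : ULift Prop` stands for "belongs to the ideal" when
`p.down` holds. -/
def idealRel : ∀ i : PrimeIdealSymbol.{v}, (Fin i.arity → ULift.{v} Prop) → Prop
  | le, p => (p 1).down → (p 0).down
  | sup, p => (p 0).down → (p 1).down → (p 2).down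
  | top, p => ¬(p 0).down
  | compl, p => (p 0).down ∨ (p 1).down

theorem rel_comp_of_rel {B C : Type*} [BooleanAlgebra B] [BooleanAlgebra C]
    (f : BoundedLatticeHom B C) :
    ∀ (i : PrimeIdealSymbol.{v}) (x : Fin i.arity → B), rel i x → rel i (f ∘ x)
  | le, _, h => OrderHomClass.mono f h
  | sup, _, h => (congrArg f h).trans (map_sup f _ _)
  | top, _, h => (congrArg f h).trans (map_top f)
  | compl, _, h => (congrArg f h).trans (map_compl' f _)

theorem idealRel_mem_of_rel {B : Type*} [BooleanAlgebra B] (I : Order.Ideal B) [I.IsPrime] :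
    ∀ (i : PrimeIdealSymbol.{v}) (x : Fin i.arity → B),
      rel i x → idealRel i (fun k => ULift.up (x k ∈ I))
  | le, _, h => I.lower h
  | sup, x, (h : x 2 = x 0 ⊔ x 1) => fun h₀ h₁ =>
    show x 2 ∈ I from h ▸ Order.Ideal.sup_mem h₀ h₁
  | top, x, (h : x 0 = ⊤) => fun (h₀ : x 0 ∈ I) =>
    Order.Ideal.IsProper.top_notMem inferInstance (h ▸ h₀)
  | compl, x, (h : x 1 = (x 0)ᶜ) =>
    show x 0 ∈ I ∨ x 1 ∈ I from h ▸ Order.Ideal.IsPrime.mem_or_compl_mem inferInstance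

end PrimeIdealSymbol

theorem stmt_10_general {G : Type u} {B : Type v}
    [Group G] [TopologicalSpace G]
    (hcsp : ∀ (ι V D : Type v) (n : ι → ℕ) [MulAction G V] [Finite D]
      (RV : ∀ i, (Fin (n i) → V) → Prop) (RD : ∀ i, (Fin (n i) → D) → Prop),
      (∀ v : V, IsOpen {g : G | g • v = v}) →
      (∀ i (x : Fin (n i) → V) (g : G), RV i x → RV i (fun k => g • x k)) →
      (∀ s : Finset V, ∃ f₀ : V → D, ∀ i (x : Fin (n i) → V),
        (∀ k, x k ∈ s) → RV i x → RD i (f₀ ∘ x)) →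
      ∃ h : V → D, (∀ i (x : Fin (n i) → V), RV i x → RD i (h ∘ x)) ∧
        ∀ (g : G) (v : V), h (g • v) = h v)
    [BooleanAlgebra B] [MulAction G B]
    (hinf : ∀ (g : G) (a b : B), g • (a ⊓ b) = g • a ⊓ g • b)
    (hcompl : ∀ (g : G) (a : B), g • aᶜ = (g • a)ᶜ)
    (hstab : ∀ b : B, IsOpen {g : G | g • b = b})
    (hnt : (⊥ : B) ≠ ⊤) :
    ∃ I : Set B, (∀ a b : B, a ≤ b → b ∈ I → a ∈ I) ∧
      (∀ a b : B, a ∈ I → b ∈ I → a ⊔ b ∈ I) ∧ I ≠ Set.univ ∧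
      (∀ b : B, b ∈ I ∨ bᶜ ∈ I) ∧ (∀ (g : G) (b : B), b ∈ I ↔ g • b ∈ I) := by
  have : Nontrivial B := nontrivial_of_ne _ _ hnt
  obtain ⟨I₀, _⟩ := Order.Ideal.exists_maximal (P := B)
  have rel_smul (i : PrimeIdealSymbol) (x : Fin i.arity → B) (g : G) (hx : i.rel x) :
      i.rel (fun k => g • x k) :=
    PrimeIdealSymbol.rel_comp_of_rel (.ofMapInfMapCompl (g • ·) (hinf g) (hcompl g)) i x hx
  obtain ⟨h, hhom, hequiv⟩ := hcsp PrimeIdealSymbol B (ULift Prop) PrimeIdealSymbol.arity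
    PrimeIdealSymbol.rel PrimeIdealSymbol.idealRel hstab rel_smul fun _ =>
      ⟨fun b => ULift.up (b ∈ I₀), fun i x _ => PrimeIdealSymbol.idealRel_mem_of_rel I₀ i x⟩
  refine ⟨{b | (h b).down}, fun a b hab => hhom .le ![a, b] hab,
    fun a b => hhom .sup ![a, b, a ⊔ b] rfl,
    fun huniv => hhom .top ![⊤] rfl (Set.eq_univ_iff_forall.1 huniv ⊤),
    fun b => hhom .compl ![b, bᶜ] rfl,
    fun g b => Iff.of_eq (congrArg ULift.down (hequiv g b)).symm⟩

theorem stmt_10 {G : Type u} {B : Type v}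
    [Group G] [TopologicalSpace G] [IsTopologicalGroup G]
    (hcsp : ∀ (ι V D : Type v) (n : ι → ℕ) [MulAction G V] [Finite D]
      (RV : ∀ i, (Fin (n i) → V) → Prop) (RD : ∀ i, (Fin (n i) → D) → Prop),
      (∀ v : V, IsOpen {g : G | g • v = v}) →
      (∀ i (x : Fin (n i) → V) (g : G), RV i x → RV i (fun k => g • x k)) →
      (∀ s : Finset V, ∃ f₀ : V → D, ∀ i (x : Fin (n i) → V),
        (∀ k, x k ∈ s) → RV i x → RD i (f₀ ∘ x)) →
      ∃ h : V → D, (∀ i (x : Fin (n i) → V), RV i x → RD i (h ∘ x)) ∧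
        ∀ (g : G) (v : V), h (g • v) = h v)
    [BooleanAlgebra B] [MulAction G B]
    (hinf : ∀ (g : G) (a b : B), g • (a ⊓ b) = g • a ⊓ g • b)
    (hcompl : ∀ (g : G) (a : B), g • aᶜ = (g • a)ᶜ)
    (hstab : ∀ b : B, IsOpen {g : G | g • b = b})
    (hnt : (⊥ : B) ≠ ⊤) :
    ∃ I : Set B, (∀ a b : B, a ≤ b → b ∈ I → a ∈ I) ∧
      (∀ a b : B, a ∈ I → b ∈ I → a ⊔ b ∈ I) ∧ I ≠ Set.univ ∧
      (∀ b : B, b ∈ I ∨ bᶜ ∈ I) ∧ (∀ (g : G) (b : B), b ∈ I ↔ g • b ∈ I) :=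
  stmt_10_general hcsp hinf hcompl hstab hnt
end

section
/- Equivariant BPIT implies equivariant CSP: let G be a topological group such that every nontrivial G-Boolean algebra admits a G-invariant prime ideal. Let V be a set with a G-action whose point stabilizers are open, let ι index G-invariant relations R_V i ⊆ V^(n i), and let D be a finite set with relations R_D i ⊆ D^(n i). If for every finite s ⊆ V there is a function f₀ : V → D preserving all constraints among tuples with coordinates in s, then there exists a G-equivariant homomorphism from (V, R_V) to (D, R_D). -/
/-!
Give `D` the discrete topology. The homomorphisms `V → D` form a closed subset `S` of the compact
space `V → D`, nonempty by compactness and finite satisfiability, and invariant under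
`(g • f) v = f (g⁻¹ • v)`. The subsets of `S` determined by finitely many coordinates form a
nontrivial `G`-Boolean algebra; its stabilizers are open because a set determined by `t` is fixed
by the open subgroup fixing `t` pointwise. An invariant prime ideal `I` is the same as the
invariant Boolean homomorphism `a ↦ a ∉ I` to `Prop`. It picks for every `v` exactly one value
`p v` with `{f | f v = p v} ∉ I`. Finite intersections of these sets are not in `I`, hence
nonempty, so `p` lies in the closure of `S`, which is `S`; invariance of `I` makes `p` equivariant.
-/

open Set
open scoped Pointwise

attribute [local instance] arrowAction

theorem arrowAction_smul_apply {G V D : Type*} [Group G] [MulAction G V] (g : G) (f : V → D)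
    (v : V) : (g • f) v = f (g⁻¹ • v) := rfl

section PrimeIdeal

variable {B : Type*} [BooleanAlgebra B] {I : Set B}

theorem top_notMem_of_ne_univ (hdown : ∀ a b : B, a ≤ b → b ∈ I → a ∈ I) (hproper : I ≠ univ) :
    ⊤ ∉ I :=
  fun h => hproper (eq_univ_of_forall fun b => hdown b ⊤ le_top h)

theorem bot_mem_of_ne_univ (hdown : ∀ a b : B, a ≤ b → b ∈ I → a ∈ I) (hproper : I ≠ univ)
    (hprime : ∀ b : B, b ∈ I ∨ bᶜ ∈ I) : ⊥ ∈ I := by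
  obtain ⟨b, hb⟩ := (ne_univ_iff_exists_notMem I).1 hproper
  exact hdown ⊥ bᶜ bot_le ((hprime b).resolve_left hb)

def BoundedLatticeHom.ofPrimeIdeal (hdown : ∀ a b : B, a ≤ b → b ∈ I → a ∈ I)
    (hsup : ∀ a b : B, a ∈ I → b ∈ I → a ⊔ b ∈ I) (hproper : I ≠ univ)
    (hprime : ∀ b : B, b ∈ I ∨ bᶜ ∈ I) : BoundedLatticeHom B Prop where
  toFun a := a ∉ I
  map_sup' a b := propext <| show a ⊔ b ∉ I ↔ a ∉ I ∨ b ∉ I from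
    ⟨fun h => not_and_or.1 fun hab => h (hsup a b hab.1 hab.2),
     fun h hab => h.elim (· (hdown a _ le_sup_left hab)) (· (hdown b _ le_sup_right hab))⟩
  map_inf' a b := propext <| show a ⊓ b ∉ I ↔ a ∉ I ∧ b ∉ I from
    ⟨fun h => ⟨fun ha => h (hdown _ a inf_le_left ha), fun hb => h (hdown _ b inf_le_right hb)⟩,
     fun ⟨ha, hb⟩ hab => by
      have hcompl : (a ⊓ b)ᶜ ∈ I := by
        rw [compl_inf]
        exact hsup _ _ ((hprime a).resolve_left ha) ((hprime b).resolve_left hb)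
      have htop := hsup _ _ hab hcompl
      rw [sup_compl_eq_top] at htop
      exact top_notMem_of_ne_univ hdown hproper htop⟩
  map_top' := eq_true (top_notMem_of_ne_univ hdown hproper)
  map_bot' := eq_false (not_not_intro (bot_mem_of_ne_univ hdown hproper hprime))

namespace BoundedLatticeHom

variable {ι : Type*} (χ : BoundedLatticeHom B Prop) (t : Finset ι) (a : ι → B)

theorem map_finset_inf_iff : χ (t.inf a) ↔ ∀ i ∈ t, χ (a i) := by
  rw [map_finset_inf, Finset.inf_eq_iInf]
  simp

theorem map_finset_sup_iff : χ (t.sup a) ↔ ∃ i ∈ t, χ (a i) := by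
  rw [map_finset_sup, Finset.sup_eq_iSup]
  simp

end BoundedLatticeHom

end PrimeIdeal

section Topology

variable {V D : Type*} [TopologicalSpace D]

theorem isClosed_setOf_comp [DiscreteTopology D] {K : Type*} [Finite K] (x : K → V)
    (P : (K → D) → Prop) : IsClosed {f : V → D | P (f ∘ x)} :=
  (isClosed_discrete {y | P y}).preimage (continuous_pi fun k => continuous_apply (x k))

theorem mem_closure_of_forall_finset_exists_eqOn {S : Set (V → D)} {p : V → D}
    (h : ∀ t : Finset V, ∃ f ∈ S, EqOn f p t) : p ∈ closure S := by
  refine mem_closure_iff_nhds.2 fun U hU => ?_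
  rw [nhds_pi, Filter.mem_pi] at hU
  obtain ⟨J, hJ, T, hT, hJT⟩ := hU
  obtain ⟨f, hfS, hfp⟩ := h hJ.toFinset
  refine ⟨f, hJT fun v hv => ?_, hfS⟩
  rw [hfp (by simpa using hv)]
  exact mem_of_mem_nhds (hT v)

end Topology

section Homomorphisms

variable {V D ι : Type*} (n : ι → ℕ) (RV : ∀ i, (Fin (n i) → V) → Prop)
  (RD : ∀ i, (Fin (n i) → D) → Prop)

def homSet : Set (V → D) := {f | ∀ i x, RV i x → RD i (f ∘ x)}

theorem isClosed_homSet [TopologicalSpace D] [DiscreteTopology D] :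
    IsClosed (homSet n RV RD) := by
  simp only [homSet, ofPred_forall]
  exact isClosed_iInter fun i => isClosed_iInter fun x => isClosed_iInter fun _ =>
    isClosed_setOf_comp x _

theorem homSet_nonempty [Finite D] (hfin : ∀ s : Finset V, ∃ f₀ : V → D, ∀ i (x : Fin (n i) → V),
      (∀ k, x k ∈ s) → RV i x → RD i (f₀ ∘ x)) :
    (homSet n RV RD).Nonempty := by
  classical
  let _ : TopologicalSpace D := ⊥
  have _ : DiscreteTopology D := ⟨rfl⟩
  let constraint (p : Σ i, {x // RV i x}) : Set (V → D) := {f | RD p.1 (f ∘ p.2.1)}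
  obtain ⟨f, -, hf⟩ := isCompact_univ.inter_iInter_nonempty constraint
    (fun p => isClosed_setOf_comp _ _) fun u => by
      obtain ⟨f₀, hf₀⟩ := hfin (u.biUnion fun p => Finset.univ.image p.2.1)
      refine ⟨f₀, trivial, mem_iInter₂.2 fun p hp => hf₀ p.1 p.2.1 (fun k => ?_) p.2.2⟩
      exact Finset.mem_biUnion.2 ⟨p, hp, Finset.mem_image_of_mem _ (Finset.mem_univ k)⟩
  exact ⟨f, fun i x hx => mem_iInter.1 hf ⟨i, x, hx⟩⟩

end Homomorphisms

section Cylinders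

variable {V D : Type*}

def cylinderAlgebra (S : Set (V → D)) : BooleanSubalgebra (Set S) where
  carrier := {A | ∃ t : Finset V, ∀ f ∈ A, ∀ f' : S, EqOn (f : V → D) f' t → f' ∈ A}
  supClosed' := by
    classical
    rintro A ⟨s, hs⟩ A' ⟨s', hs'⟩
    refine ⟨s ∪ s', ?_⟩
    rintro f (hf | hf) f' hff'
    · exact Or.inl (hs f hf f' (hff'.mono (by simp)))
    · exact Or.inr (hs' f hf f' (hff'.mono (by simp)))
  infClosed' := by
    classical
    rintro A ⟨s, hs⟩ A' ⟨s', hs'⟩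
    exact ⟨s ∪ s', fun f hf f' hff' =>
      ⟨hs f hf.1 f' (hff'.mono (by simp)), hs' f hf.2 f' (hff'.mono (by simp))⟩⟩
  compl_mem' := by
    rintro A ⟨t, ht⟩
    exact ⟨t, fun f hf f' hff' hf' => hf (ht f' hf' f hff'.symm)⟩
  bot_mem' := ⟨∅, fun _ hf => hf.elim⟩

namespace cylinderAlgebra

variable (S : Set (V → D))

def basic (v : V) (d : D) : cylinderAlgebra S :=
  ⟨{f | (f : V → D) v = d}, {v}, fun _ hf _ hff' => (hff' (by simp)).symm.trans hf⟩

variable {S}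

theorem coe_finset_inf {ι : Type*} (t : Finset ι) (a : ι → cylinderAlgebra S) :
    ((t.inf a : cylinderAlgebra S) : Set S) = t.inf fun i => (a i : Set S) :=
  map_finset_inf (cylinderAlgebra S).subtype t a

theorem coe_finset_sup {ι : Type*} (t : Finset ι) (a : ι → cylinderAlgebra S) :
    ((t.sup a : cylinderAlgebra S) : Set S) = t.sup fun i => (a i : Set S) :=
  map_finset_sup (cylinderAlgebra S).subtype t a

theorem bot_ne_top (hS : S.Nonempty) : (⊥ : cylinderAlgebra S) ≠ ⊤ :=
  have := hS.to_subtype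
  fun h => Set.empty_ne_univ (congrArg Subtype.val h)

theorem basic_inf_basic_of_ne {v : V} {d d' : D} (h : d ≠ d') :
    basic S v d ⊓ basic S v d' = ⊥ :=
  Subtype.ext (eq_empty_of_forall_notMem fun _ hf => h (hf.1.symm.trans hf.2))

theorem finset_sup_basic [Fintype D] (v : V) : Finset.univ.sup (basic S v) = ⊤ := by
  refine Subtype.ext (eq_univ_of_forall fun f => ?_)
  rw [coe_finset_sup, Finset.sup_set_eq_biUnion]
  exact mem_iUnion₂.2 ⟨(f : V → D) v, Finset.mem_univ _, rfl⟩

theorem exists_eqOn_of_finset_inf_basic_ne_bot {p : V → D} {t : Finset V}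
    (h : t.inf (fun v => basic S v (p v)) ≠ ⊥) : ∃ f ∈ S, EqOn f p t := by
  obtain ⟨f, hf⟩ := nonempty_iff_ne_empty.2 fun he => h (Subtype.ext he)
  rw [coe_finset_inf, Finset.inf_set_eq_iInter] at hf
  exact ⟨f, f.2, fun v hv => mem_iInter₂.1 hf v hv⟩

theorem existsUnique_basic [Finite D] (χ : BoundedLatticeHom (cylinderAlgebra S) Prop) (v : V) :
    ∃! d, χ (basic S v d) := by
  have := Fintype.ofFinite D
  obtain ⟨d, -, hd⟩ := (χ.map_finset_sup_iff Finset.univ (basic S v)).1 <| by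
    rw [finset_sup_basic, map_top]
    trivial
  refine ⟨d, hd, fun d' hd' => by_contra fun hne => ?_⟩
  have hinf : χ (basic S v d' ⊓ basic S v d) := by rw [map_inf]; exact ⟨hd', hd⟩
  rwa [basic_inf_basic_of_ne hne, map_bot] at hinf

theorem mem_closure_of_forall_basic [TopologicalSpace D]
    (χ : BoundedLatticeHom (cylinderAlgebra S) Prop) {p : V → D} (hp : ∀ v, χ (basic S v (p v))) :
    p ∈ closure S :=
  mem_closure_of_forall_finset_exists_eqOn fun t =>
    exists_eqOn_of_finset_inf_basic_ne_bot fun h => by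
      simpa [h] using (χ.map_finset_inf_iff t _).2 fun v _ => hp v

section Action

variable {G : Type*} [Group G] [MulAction G V] {S : SubMulAction G (V → D)}

instance : MulAction G (cylinderAlgebra (S : Set (V → D))) where
  smul g A := ⟨g • (A : Set S), by
    classical
    obtain ⟨t, ht⟩ := A.2
    refine ⟨t.image (g • ·), fun f hf f' hff' => ?_⟩
    rw [mem_smul_set_iff_inv_smul_mem] at hf ⊢
    refine ht _ hf _ fun v hv => ?_
    simpa [arrowAction_smul_apply] using hff' (Finset.mem_coe.2 (Finset.mem_image_of_mem _ hv))⟩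
  one_smul A := Subtype.ext (one_smul G (A : Set S))
  mul_smul g g' A := Subtype.ext (mul_smul g g' (A : Set S))

theorem coe_smul (g : G) (A : cylinderAlgebra (S : Set (V → D))) :
    ((g • A : cylinderAlgebra (S : Set (V → D))) : Set S) = g • (A : Set S) := rfl

theorem smul_inf (g : G) (A A' : cylinderAlgebra (S : Set (V → D))) :
    g • (A ⊓ A') = g • A ⊓ g • A' :=
  Subtype.ext smul_set_inter

theorem smul_compl (g : G) (A : cylinderAlgebra (S : Set (V → D))) : g • Aᶜ = (g • A)ᶜ :=
  Subtype.ext smul_set_compl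

theorem smul_basic (g : G) (v : V) (d : D) :
    g • basic (S : Set (V → D)) v d = basic _ (g • v) d := by
  refine Subtype.ext (ext fun f => ?_)
  rw [coe_smul, mem_smul_set_iff_inv_smul_mem]
  simp [basic, arrowAction_smul_apply]

theorem isOpen_stabilizer [TopologicalSpace G] [SeparatelyContinuousMul G]
    (hstab : ∀ v : V, IsOpen {g : G | g • v = v}) (A : cylinderAlgebra (S : Set (V → D))) :
    IsOpen {g : G | g • A = A} := by
  obtain ⟨t, ht⟩ := A.2
  have hfix : (⋂ v ∈ t, {g : G | g • v = v}) ⊆ MulAction.stabilizer G A := by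
    intro g hg
    have hg' : ∀ f : S, EqOn (f : V → D) (g⁻¹ • f : S) t := fun f v hv => by
      have hgv : g • v = v := mem_iInter₂.1 hg v hv
      simp [arrowAction_smul_apply, hgv]
    refine Subtype.ext (ext fun f => ?_)
    rw [coe_smul, mem_smul_set_iff_inv_smul_mem]
    exact ⟨fun hf => ht _ hf f (hg' f).symm, fun hf => ht f hf _ (hg' f)⟩
  exact Subgroup.isOpen_of_mem_nhds _ (Filter.mem_of_superset
    ((isOpen_biInter_finset fun v _ => hstab v).mem_nhds (by simp : (1 : G) ∈ _)) hfix)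

theorem exists_mem_forall_smul_eq [Finite D] [TopologicalSpace D]
    (hS : IsClosed (S : Set (V → D)))
    (χ : BoundedLatticeHom (cylinderAlgebra (S : Set (V → D))) Prop)
    (hχ : ∀ (g : G) A, χ (g • A) = χ A) : ∃ p ∈ S, ∀ g : G, g • p = p := by
  choose p hp using fun v => (existsUnique_basic χ v).exists
  refine ⟨p, hS.closure_subset (mem_closure_of_forall_basic χ hp), fun g => funext fun v => ?_⟩
  refine (existsUnique_basic χ (g⁻¹ • v)).unique (hp _) ?_
  rw [← smul_basic, hχ]
  exact hp v

end Action

end cylinderAlgebra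

end Cylinders

theorem stmt_11 {G : Type u} {V : Type v} {D : Type w} {ι : Type x}
    [Group G] [TopologicalSpace G] [IsTopologicalGroup G]
    (hbpit : ∀ (B : Type (max v w)) [BooleanAlgebra B] [MulAction G B],
      (∀ (g : G) (a b : B), g • (a ⊓ b) = g • a ⊓ g • b) →
      (∀ (g : G) (a : B), g • aᶜ = (g • a)ᶜ) →
      (∀ b : B, IsOpen {g : G | g • b = b}) →
      (⊥ : B) ≠ ⊤ →
      ∃ I : Set B, (∀ a b : B, a ≤ b → b ∈ I → a ∈ I) ∧
        (∀ a b : B, a ∈ I → b ∈ I → a ⊔ b ∈ I) ∧ I ≠ Set.univ ∧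
        (∀ b : B, b ∈ I ∨ bᶜ ∈ I) ∧ (∀ (g : G) (b : B), b ∈ I ↔ g • b ∈ I))
    [MulAction G V] [Finite D]
    (hstab : ∀ v : V, IsOpen {g : G | g • v = v})
    (n : ι → ℕ) (RV : ∀ i, (Fin (n i) → V) → Prop) (RD : ∀ i, (Fin (n i) → D) → Prop)
    (hinv : ∀ i (x : Fin (n i) → V) (g : G), RV i x → RV i (fun k => g • x k))
    (hfin : ∀ s : Finset V, ∃ f₀ : V → D, ∀ i (x : Fin (n i) → V),
      (∀ k, x k ∈ s) → RV i x → RD i (f₀ ∘ x)) :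
    ∃ h : V → D, (∀ i (x : Fin (n i) → V), RV i x → RD i (h ∘ x)) ∧
      ∀ (g : G) (v : V), h (g • v) = h v := by
  let _ : TopologicalSpace D := ⊥
  have _ : DiscreteTopology D := ⟨rfl⟩
  let S : SubMulAction G (V → D) :=
    ⟨homSet n RV RD, fun g _ hf i x hx => hf i _ (hinv i x g⁻¹ hx)⟩
  obtain ⟨I, hdown, hsup, hproper, hprime, hI⟩ := hbpit (cylinderAlgebra (S : Set (V → D)))
    cylinderAlgebra.smul_inf cylinderAlgebra.smul_compl (cylinderAlgebra.isOpen_stabilizer hstab)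
    (cylinderAlgebra.bot_ne_top (homSet_nonempty n RV RD hfin))
  obtain ⟨p, hpS, hp⟩ := cylinderAlgebra.exists_mem_forall_smul_eq (isClosed_homSet n RV RD)
    (.ofPrimeIdeal hdown hsup hproper hprime) fun g A => propext (not_congr (hI g A)).symm
  exact ⟨p, hpS, fun g v => by simpa [arrowAction_smul_apply] using congrFun (hp g⁻¹) v⟩
end

section
/- Equivariant Boolean prime ideal theorem over the ordered rationals (Halpern, equivariant form): let G = Aut(ℚ,<) be the group of order-isomorphisms of ℚ with the topology of pointwise convergence. Then every nontrivial G-Boolean algebra admits a G-invariant prime ideal. -/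
open Set

theorem my_ramsey {C : Type*} [Finite C] :
    ∀ (n : ℕ) (c : Finset ℕ → C) (S : Set ℕ), S.Infinite →
    ∃ H ⊆ S, H.Infinite ∧ ∀ A B : Finset ℕ, ↑A ⊆ H → ↑B ⊆ H →
      A.card = n → B.card = n → c A = c B := by
  intro n
  induction n with
  | zero =>
    intro c S hS
    refine ⟨S, le_refl _, hS, fun A B _ _ hA hB => ?_⟩
    rw [Finset.card_eq_zero.mp hA, Finset.card_eq_zero.mp hB]
  | succ n ih =>
    intro c S hS
    -- one step of the construction
    have step : ∀ T : Set ℕ, T.Infinite → ∃ a ∈ T, ∃ T' : Set ℕ, T'.Infinite ∧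
        T' ⊆ T ∧ (∀ x ∈ T', a < x) ∧
        (∀ A B : Finset ℕ, ↑A ⊆ T' → ↑B ⊆ T' → A.card = n → B.card = n →
          c (insert a A) = c (insert a B)) := by
      intro T hT
      obtain ⟨a, ha⟩ := hT.nonempty
      have hT' : (T \ Set.Iic a).Infinite := hT.diff (Set.finite_Iic a)
      obtain ⟨H', hH'sub, hH'inf, hH'⟩ := ih (fun A => c (insert a A)) _ hT'
      exact ⟨a, ha, H', hH'inf, fun x hx => ((hH'sub hx).1),
        fun x hx => lt_of_not_ge fun hle => (hH'sub hx).2 hle, hH'⟩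
    -- the recursive sequence of pairs (aₖ, Tₖ)
    let D := {p : ℕ × Set ℕ // p.2.Infinite}
    have exd : ∀ d : D, ∃ d' : D, d'.1.1 ∈ d.1.2 ∧ d'.1.2 ⊆ d.1.2 ∧
        (∀ x ∈ d'.1.2, d'.1.1 < x) ∧
        (∀ A B : Finset ℕ, ↑A ⊆ d'.1.2 → ↑B ⊆ d'.1.2 → A.card = n → B.card = n →
          c (insert d'.1.1 A) = c (insert d'.1.1 B)) := by
      intro d
      obtain ⟨a, ha, T', h1, h2, h3, h4⟩ := step d.1.2 d.2
      exact ⟨⟨(a, T'), h1⟩, ha, h2, h3, h4⟩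
    choose stp hstp1 hstp2 hstp3 hstp4 using exd
    let seq : ℕ → D := fun k => Nat.rec (stp ⟨(0, S), hS⟩) (fun _ d => stp d) k
    have seqsucc : ∀ k, seq (k + 1) = stp (seq k) := fun k => rfl
    set a : ℕ → ℕ := fun k => (seq k).1.1 with ha
    set T : ℕ → Set ℕ := fun k => (seq k).1.2 with hTdef
    have Tmono : ∀ k l, k ≤ l → T l ⊆ T k := by
      intro k l hkl
      induction l with
      | zero => rw [Nat.le_zero.mp hkl]
      | succ l ihl =>
        rcases Nat.lt_or_ge k (l+1) with h | h
        · exact (hstp2 (seq l)).trans (ihl (Nat.lt_succ_iff.mp h))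
        · rw [Nat.le_antisymm hkl h]
    have amem : ∀ k l, k < l → a l ∈ T k := by
      intro k l hkl
      rcases Nat.exists_eq_add_of_lt hkl with ⟨m, rfl⟩
      exact Tmono k (k+m) (Nat.le_add_right _ _) (hstp1 (seq (k+m)))
    have hlt : ∀ k, ∀ x ∈ T k, a k < x := by
      intro k
      cases k with
      | zero => exact hstp3 ⟨(0, S), hS⟩
      | succ k => exact hstp3 (seq k)
    have amono : ∀ k l, k < l → a k < a l := fun k l hkl => hlt k _ (amem k l hkl)
    have ainj : Function.Injective a := by
      intro k l hkl
      rcases lt_trichotomy k l with h | h | h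
      · exact absurd hkl (amono k l h).ne
      · exact h
      · exact absurd hkl.symm (amono l k h).ne
    -- the color of stage k
    have hstp4' : ∀ k, ∀ A B : Finset ℕ, ↑A ⊆ T k → ↑B ⊆ T k → A.card = n → B.card = n →
        c (insert (a k) A) = c (insert (a k) B) := by
      intro k
      cases k with
      | zero => exact hstp4 ⟨(0, S), hS⟩
      | succ k => exact hstp4 (seq k)
    have ecolor : ∀ k, ∃ e : C, ∀ A : Finset ℕ, ↑A ⊆ T k → A.card = n →
        c (insert (a k) A) = e := by
      intro k
      obtain ⟨A₀, hA₀sub, hA₀card⟩ := (seq k).2.exists_subset_card_eq n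
      exact ⟨c (insert (a k) A₀), fun A hA hAc => hstp4' k A A₀ hA hA₀sub hAc hA₀card⟩
    choose e he using ecolor
    obtain ⟨y, hy⟩ := Finite.exists_infinite_fiber e
    have hKinf : (e ⁻¹' {y}).Infinite := Set.infinite_coe_iff.mp hy
    refine ⟨a '' (e ⁻¹' {y}), ?_, hKinf.image ainj.injOn, ?_⟩
    · rintro x ⟨k, _, rfl⟩
      cases k with
      | zero => exact hstp1 ⟨(0, S), hS⟩
      | succ k => exact (hstp2 ⟨(0,S), hS⟩) (Tmono 0 k (Nat.zero_le _) (hstp1 (seq k)))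
    · intro A B hA hB hAc hBc
      have key : ∀ A : Finset ℕ, ↑A ⊆ a '' (e ⁻¹' {y}) → A.card = n + 1 → c A = y := by
        intro A hA hAc
        have hne : A.Nonempty := Finset.card_pos.mp (by omega)
        set m := A.min' hne with hm
        obtain ⟨k, hk, hak⟩ := hA (A.min'_mem hne)
        have herase : ↑(A.erase m) ⊆ T k := by
          intro x hx
          rcases Finset.mem_erase.mp hx with ⟨hxm, hxA⟩
          obtain ⟨l, hl, hal⟩ := hA hxA
          have hlk : k < l := by
            rcases lt_trichotomy k l with h | h | h
            · exact h
            · exact absurd (by rw [← hal, ← h, hak, hm] : x = m) hxm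
            · exact absurd (A.min'_le x hxA) (by rw [← hm, ← hak, ← hal] at *; exact not_le.mpr (amono l k h))
          exact hal ▸ amem k l hlk
        have hcard : (A.erase m).card = n := by
          rw [Finset.card_erase_of_mem (A.min'_mem hne), hAc]; omega
        have hma : m = a k := hm.trans hak.symm
        rw [hma] at herase hcard
        have : c A = e k := by
          rw [← Finset.insert_erase (A.min'_mem hne), ← hm, hma]
          exact he k (A.erase (a k)) herase hcard
        rw [this]; exact hk
      rw [key A hA hAc, key B hB hBc]

noncomputable def pwFun (c u v : ℚ) : ℚ → ℚ := fun x =>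
  if x ≤ c then x else if x ≤ u then c + (x - c) * ((v - c) / (u - c)) else x + (v - u)

lemma pwFun_fix {c u v x : ℚ} (h : x ≤ c) : pwFun c u v x = x := if_pos h

lemma pwFun_top {c u v : ℚ} (hu : c < u) : pwFun c u v u = v := by
  have h1 : u - c ≠ 0 := sub_ne_zero.mpr (ne_of_gt hu)
  unfold pwFun
  rw [if_neg (not_le.mpr hu), if_pos le_rfl, mul_comm, div_mul_cancel₀ _ h1]
  ring

lemma pwFun_strictMono {c u v : ℚ} (hu : c < u) (hv : c < v) : StrictMono (pwFun c u v) := by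
  have h1' : u - c ≠ 0 := sub_ne_zero.mpr (ne_of_gt hu)
  have hr : 0 < (v - c) / (u - c) := div_pos (by linarith) (by linarith)
  set r := (v - c) / (u - c) with hrdef
  have hvr : c + (u - c) * r = v := by
    rw [hrdef, mul_comm, div_mul_cancel₀ _ h1']; ring
  intro x y hxy
  unfold pwFun
  rw [← hrdef]
  split_ifs <;> try linarith
  · nlinarith [mul_pos (show (0:ℚ) < y - c by linarith) hr]
  · nlinarith [mul_lt_mul_of_pos_right (show x - c < y - c by linarith) hr]
  · nlinarith [mul_le_mul_of_nonneg_right (show x - c ≤ u - c by linarith) hr.le]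

lemma pwFun_inv {c u v : ℚ} (hu : c < u) (hv : c < v) :
    ∀ y, pwFun c u v (pwFun c v u y) = y := by
  intro y
  have h1 : u - c ≠ 0 := sub_ne_zero.mpr (ne_of_gt hu)
  have h2' : v - c ≠ 0 := sub_ne_zero.mpr (ne_of_gt hv)
  rcases le_or_gt y c with h | h
  · rw [pwFun_fix h, pwFun_fix h]
  · rcases le_or_gt y v with h2 | h2
    · have hz1 : c < c + (y - c) * ((u - c) / (v - c)) := by
        nlinarith [mul_pos (show (0:ℚ) < y - c by linarith)
          (div_pos (show (0:ℚ) < u - c by linarith) (show (0:ℚ) < v - c by linarith))]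
      have hz2 : c + (y - c) * ((u - c) / (v - c)) ≤ u := by
        have : (y - c) * ((u - c) / (v - c)) ≤ u - c := by
          rw [← mul_div_assoc, div_le_iff₀ (show (0:ℚ) < v - c by linarith)]
          nlinarith [mul_le_mul_of_nonneg_right (show y - c ≤ v - c by linarith)
            (show (0:ℚ) ≤ u - c by linarith)]
        linarith
      unfold pwFun
      rw [if_neg (not_le.mpr h), if_pos h2, if_neg (not_le.mpr hz1), if_pos hz2]
      field_simp
      ring
    · have hz : u < y + (u - v) := by linarith
      unfold pwFun
      rw [if_neg (not_le.mpr h), if_neg (not_le.mpr h2),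
        if_neg (not_le.mpr (lt_trans hu hz)), if_neg (not_le.mpr hz)]
      ring

noncomputable def pwIso {c u v : ℚ} (hu : c < u) (hv : c < v) : ℚ ≃o ℚ :=
  StrictMono.orderIsoOfSurjective _ (pwFun_strictMono hu hv)
    (fun y => ⟨pwFun c v u y, pwFun_inv hu hv y⟩)

/-- Any two strictly increasing finite tuples in `ℚ` are matched by an order automorphism. -/
theorem ext_tuple : ∀ (n : ℕ) (s t : Fin n → ℚ), StrictMono s → StrictMono t →
    ∃ g : ℚ ≃o ℚ, ∀ i, g (s i) = t i := by
  intro n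
  induction n with
  | zero => exact fun s t _ _ => ⟨1, fun i => i.elim0⟩
  | succ n ih =>
    intro s t hs ht
    obtain ⟨h, hh⟩ := ih (s ∘ Fin.castSucc) (t ∘ Fin.castSucc)
      (hs.comp (fun a b hab => Fin.castSucc_lt_castSucc_iff.mpr hab))
      (ht.comp (fun a b hab => Fin.castSucc_lt_castSucc_iff.mpr hab))
    simp only [Function.comp] at hh
    set u := h (s (Fin.last n)) with hu
    set v := t (Fin.last n) with hv
    have hexc : ∃ c : ℚ, c < u ∧ c < v ∧ ∀ j : Fin n, h (s j.castSucc) ≤ c := by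
      cases n with
      | zero =>
        refine ⟨min u v - 1, ?_, ?_, fun j => j.elim0⟩
        · have := min_le_left u v; linarith
        · have := min_le_right u v; linarith
      | succ m =>
        refine ⟨t (Fin.last m).castSucc, ?_, ?_, ?_⟩
        · rw [← hh (Fin.last m), hu]
          exact h.strictMono (hs (Fin.castSucc_lt_last (Fin.last m)))
        · rw [hv]
          exact ht (Fin.castSucc_lt_last (Fin.last m))
        · intro j
          rw [hh j]
          exact (ht.monotone (Fin.castSucc_le_castSucc_iff.mpr (Fin.le_last j)))
    obtain ⟨c, hcu, hcv, hfix⟩ := hexc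
    refine ⟨h.trans (pwIso hcu hcv), fun i => ?_⟩
    rcases Fin.eq_castSucc_or_eq_last i with ⟨j, rfl⟩ | rfl
    · have h' : (h.trans (pwIso hcu hcv)) (s j.castSucc) = pwFun c u v (h (s j.castSucc)) := rfl
      rw [h', pwFun_fix (hfix j), hh j]
    · have h' : (h.trans (pwIso hcu hcv)) (s (Fin.last n)) = pwFun c u v u := rfl
      rw [h', pwFun_top hcu]

theorem my_ramseyQ {C : Type*} [Finite C] (n : ℕ) (c : Finset ℚ → C) :
    ∃ H : Set ℚ, H.Infinite ∧ ∀ A B : Finset ℚ, ↑A ⊆ H → ↑B ⊆ H →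
      A.card = n → B.card = n → c A = c B := by
  classical
  obtain ⟨H, -, hinf, hhom⟩ := my_ramsey n (fun A => c (A.image (fun k : ℕ => (k : ℚ))))
    Set.univ Set.infinite_univ
  refine ⟨(fun k : ℕ => (k : ℚ)) '' H, hinf.image (Nat.cast_injective.injOn), ?_⟩
  intro A B hA hB hAc hBc
  obtain ⟨A₀, hA₀sub, rfl⟩ := Finset.subset_set_image_iff.mp hA
  obtain ⟨B₀, hB₀sub, rfl⟩ := Finset.subset_set_image_iff.mp hB
  rw [Finset.card_image_of_injective _ Nat.cast_injective] at hAc hBc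
  exact hhom A₀ B₀ hA₀sub hB₀sub hAc hBc

noncomputable def mapSet (F A : Finset ℚ) {n : ℕ} (hF : F.card = n) (hA : A.card = n) :
    ℚ ≃o ℚ :=
  (ext_tuple n (F.orderEmbOfFin hF) (A.orderEmbOfFin hA)
    (F.orderEmbOfFin hF).strictMono (A.orderEmbOfFin hA).strictMono).choose

lemma mapSet_spec (F A : Finset ℚ) {n : ℕ} (hF : F.card = n) (hA : A.card = n) :
    ∀ i, mapSet F A hF hA (F.orderEmbOfFin hF i) = A.orderEmbOfFin hA i :=
  (ext_tuple n (F.orderEmbOfFin hF) (A.orderEmbOfFin hA)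
    (F.orderEmbOfFin hF).strictMono (A.orderEmbOfFin hA).strictMono).choose_spec

lemma mapSet_mem (F A : Finset ℚ) {n : ℕ} (hF : F.card = n) (hA : A.card = n) :
    ∀ q ∈ F, mapSet F A hF hA q ∈ A := by
  intro q hq
  obtain ⟨i, hi⟩ : ∃ i, F.orderEmbOfFin hF i = q := by
    have hrange := Finset.range_orderEmbOfFin F hF
    have : q ∈ Set.range (F.orderEmbOfFin hF) := by rw [hrange]; exact hq
    exact this
  rw [← hi, mapSet_spec]
  exact Finset.orderEmbOfFin_mem A hA i

lemma mapSet_agree (w : ℚ ≃o ℚ) (F : Finset ℚ) {n : ℕ} (hF : F.card = n)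
    (hA : (F.image ⇑w).card = n) :
    ∀ q ∈ F, mapSet F (F.image ⇑w) hF hA q = w q := by
  intro q hq
  have hun : (fun i => w (F.orderEmbOfFin hF i)) = ⇑((F.image ⇑w).orderEmbOfFin hA) :=
    Finset.orderEmbOfFin_unique hA
      (fun i => Finset.mem_image_of_mem _ (Finset.orderEmbOfFin_mem F hF i))
      (w.strictMono.comp (F.orderEmbOfFin hF).strictMono)
  obtain ⟨i, hi⟩ : ∃ i, F.orderEmbOfFin hF i = q := by
    have hrange := Finset.range_orderEmbOfFin F hF
    have : q ∈ Set.range (F.orderEmbOfFin hF) := by rw [hrange]; exact hq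
    exact this
  rw [← hi, mapSet_spec, ← congrFun hun i]

/-- The topology of pointwise convergence on the group `ℚ ≃o ℚ` of order-isomorphisms
of the rationals: the topology induced from the product topology on `ℚ → ℚ`,
with `ℚ` discrete. -/
instance ratOrderIsoTop : TopologicalSpace (ℚ ≃o ℚ) :=
  TopologicalSpace.induced (fun g : ℚ ≃o ℚ => (g : ℚ → ℚ))
    (@Pi.topologicalSpace ℚ (fun _ => ℚ) (fun _ => ⊥))

theorem stmt_12 {B : Type*} [BooleanAlgebra B] [MulAction (ℚ ≃o ℚ) B]
    (hinf : ∀ (g : ℚ ≃o ℚ) (a b : B), g • (a ⊓ b) = g • a ⊓ g • b)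
    (hcompl : ∀ (g : ℚ ≃o ℚ) (a : B), g • aᶜ = (g • a)ᶜ)
    (hstab : ∀ b : B, IsOpen {g : ℚ ≃o ℚ | g • b = b})
    (hnt : (⊥ : B) ≠ ⊤) :
    ∃ I : Set B, (∀ a b : B, a ≤ b → b ∈ I → a ∈ I) ∧
      (∀ a b : B, a ∈ I → b ∈ I → a ⊔ b ∈ I) ∧ I ≠ Set.univ ∧
      (∀ b : B, b ∈ I ∨ bᶜ ∈ I) ∧ (∀ (g : ℚ ≃o ℚ) (b : B), b ∈ I ↔ g • b ∈ I) := by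
  classical
  -- smul preserves ⊥ and ⊤
  have hsbot : ∀ g : ℚ ≃o ℚ, g • (⊥ : B) = ⊥ := by
    intro g
    have h1 : g • ((⊥ : B) ⊓ ⊥ᶜ) = g • ⊥ ⊓ (g • ⊥)ᶜ := by rw [hinf, hcompl]
    rw [inf_compl_eq_bot] at h1
    rw [h1, inf_compl_eq_bot]
  have hstop : ∀ g : ℚ ≃o ℚ, g • (⊤ : B) = ⊤ := by
    intro g
    have h1 : g • ((⊥ : B)ᶜ) = (g • ⊥)ᶜ := hcompl g ⊥
    rw [compl_bot] at h1
    rw [h1, hsbot, compl_bot]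
  -- finite supports
  have exsupp : ∀ b : B, ∃ F : Finset ℚ, ∀ g : ℚ ≃o ℚ, (∀ q ∈ F, g q = q) → g • b = b := by
    intro b
    obtain ⟨V, hVopen, hVpre⟩ :=
      (@isOpen_induced_iff (ℚ ≃o ℚ) (ℚ → ℚ) (@Pi.topologicalSpace ℚ (fun _ => ℚ) (fun _ => ⊥))
        {g : ℚ ≃o ℚ | g • b = b} (fun g : ℚ ≃o ℚ => (g : ℚ → ℚ))).mp (hstab b)
    have h1 : ⇑(1 : ℚ ≃o ℚ) ∈ V := by
      have h2 : (1 : ℚ ≃o ℚ) ∈ {g : ℚ ≃o ℚ | g • b = b} := one_smul _ b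
      rw [← hVpre] at h2
      exact h2
    obtain ⟨I, u, hu, hsub⟩ := (@isOpen_pi_iff ℚ (fun _ => ℚ) (fun _ => ⊥) V).mp hVopen _ h1
    refine ⟨I, fun g hg => ?_⟩
    have hgV : ⇑g ∈ V := hsub (Set.mem_pi.mpr (fun q hq => by
      rw [hg q hq]
      exact (hu q hq).2))
    have : g ∈ (fun g : ℚ ≃o ℚ => ⇑g) ⁻¹' V := hgV
    rw [hVpre] at this
    exact this
  choose supp hsupp using exsupp
  have smul_eq_of_agree : ∀ (b : B) (g h : ℚ ≃o ℚ), (∀ q ∈ supp b, g q = h q) →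
      g • b = h • b := by
    intro b g h hagree
    have key : (h⁻¹ * g) • b = b := hsupp b _ (fun q hq => by
      have h0 : (h⁻¹ * g) q = h⁻¹ (g q) := rfl
      rw [h0, hagree q hq]
      simp)
    calc g • b = (h * (h⁻¹ * g)) • b := by rw [mul_inv_cancel_left]
    _ = h • ((h⁻¹ * g) • b) := mul_smul _ _ _
    _ = h • b := by rw [key]
  -- base prime ideal
  have hdisj : Disjoint ((Order.PFilter.principal (⊤ : B)) : Set B)
      ((Order.Ideal.principal (⊥ : B)) : Set B) := by
    rw [Set.disjoint_left]
    intro x hxF hxI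
    have h1 : (⊤ : B) ≤ x := hxF
    have h2 : x ≤ ⊥ := hxI
    exact hnt (le_antisymm (h1.trans h2) bot_le).symm
  obtain ⟨J, hJprime, -, hJdisj⟩ := DistribLattice.prime_ideal_of_disjoint_filter_ideal hdisj
  set U₀ : B → Prop := fun x => x ∉ J with hU₀
  have hU₀top : U₀ ⊤ := Set.disjoint_left.mp hJdisj (by exact le_rfl)
  have hU₀inf : ∀ a b : B, U₀ (a ⊓ b) ↔ U₀ a ∧ U₀ b := by
    intro a b
    constructor
    · intro h
      constructor
      · exact fun ha => h (J.lower inf_le_left ha)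
      · exact fun hb => h (J.lower inf_le_right hb)
    · rintro ⟨ha, hb⟩ hab
      rcases hJprime.mem_or_mem hab with h | h
      · exact ha h
      · exact hb h
  have hU₀compl : ∀ a : B, U₀ aᶜ ↔ ¬ U₀ a := by
    intro a
    constructor
    · intro h ha
      rcases hJprime.mem_or_mem (x := a) (y := aᶜ) (by rw [inf_compl_eq_bot]; exact J.bot_mem)
        with h2 | h2
      · exact ha h2
      · exact h h2
    · intro h hc
      have ha : a ∈ J := not_not.mp (fun hna => h hna)
      have : a ⊔ aᶜ ∈ J := Order.Ideal.sup_mem ha hc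
      rw [sup_compl_eq_top] at this
      exact hU₀top this
  -- the finitary lemma
  have finitary : ∀ d : Finset ((ℚ ≃o ℚ) × B), ∃ f : B → Prop, f ⊤ ∧
      (∀ a b : B, f (a ⊓ b) ↔ f a ∧ f b) ∧ (∀ a : B, f aᶜ ↔ ¬ f a) ∧
      (∀ p ∈ d, (f (p.1 • p.2) ↔ f p.2)) := by
    intro d
    set F : Finset ℚ := d.biUnion (fun p => supp p.2) with hFdef
    have hFsupp : ∀ p ∈ d, ∀ g h : ℚ ≃o ℚ, (∀ q ∈ F, g q = h q) → g • p.2 = h • p.2 := by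
      intro p hp g h hg
      exact smul_eq_of_agree p.2 g h (fun q hq => hg q (Finset.mem_biUnion.mpr ⟨p, hp, hq⟩))
    set n := F.card with hn
    have himgcard : ∀ w : ℚ ≃o ℚ, (F.image ⇑w).card = n :=
      fun w => (Finset.card_image_of_injective F (EquivLike.injective w)).trans hn.symm
    set cQ : Finset ℚ → ({p // p ∈ d} → Prop) := fun A =>
      if hA : A.card = n then fun p => U₀ ((mapSet F A hn.symm hA) • (p : (ℚ ≃o ℚ) × B).2)
      else fun _ => True with hcQ
    haveI : Fintype {p // p ∈ d} := FinsetCoe.fintype d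
    haveI : Finite {p // p ∈ d} := Finite.of_fintype _
    haveI : Finite ({p // p ∈ d} → Prop) := Pi.finite
    obtain ⟨H, hHinf, hHhom⟩ := my_ramseyQ (C := {p // p ∈ d} → Prop) n cQ
    set S' : Finset ℚ := F ∪ d.biUnion (fun p => F.image ⇑p.1) with hS'
    obtain ⟨Hs, hHsSub, hHsCard⟩ := hHinf.exists_subset_card_eq S'.card
    set h : ℚ ≃o ℚ := mapSet S' Hs rfl hHsCard with hhdef
    have hhmem : ∀ q ∈ S', h q ∈ H :=
      fun q hq => hHsSub (mapSet_mem S' Hs rfl hHsCard q hq)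
    refine ⟨fun b => U₀ (h • b), ?_, ?_, ?_, ?_⟩
    · show U₀ (h • (⊤ : B)); rw [hstop]; exact hU₀top
    · intro a b
      show U₀ (h • (a ⊓ b)) ↔ U₀ (h • a) ∧ U₀ (h • b)
      rw [hinf]; exact hU₀inf _ _
    · intro a
      show U₀ (h • aᶜ) ↔ ¬ U₀ (h • a)
      rw [hcompl]; exact hU₀compl _
    · rintro ⟨g, b⟩ hp
      have keyc : ∀ w : ℚ ≃o ℚ, cQ (F.image ⇑w) ⟨(g, b), hp⟩ = U₀ (w • b) := by
        intro w
        have hag : mapSet F (F.image ⇑w) hn.symm (himgcard w) • b = w • b :=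
          hFsupp (g, b) hp _ w (mapSet_agree w F hn.symm (himgcard w))
        simp only [hcQ]
        rw [dif_pos (himgcard w)]
        simp only [hag]
      have hsub1 : ↑(F.image ⇑h) ⊆ H := by
        intro x hx
        obtain ⟨q, hq, rfl⟩ := Finset.mem_image.mp hx
        exact hhmem q (Finset.mem_union_left _ hq)
      have hsub2 : ↑(F.image ⇑(h * g)) ⊆ H := by
        intro x hx
        obtain ⟨q, hq, rfl⟩ := Finset.mem_image.mp hx
        have : (h * g) q = h (g q) := rfl
        rw [this]
        exact hhmem (g q) (Finset.mem_union_right _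
          (Finset.mem_biUnion.mpr ⟨(g, b), hp, Finset.mem_image_of_mem _ hq⟩))
      have hhom := hHhom (F.image ⇑h) (F.image ⇑(h * g)) hsub1 hsub2 (himgcard h)
        (himgcard (h * g))
      have heq := congrFun hhom ⟨(g, b), hp⟩
      rw [keyc h, keyc (h * g)] at heq
      show U₀ (h • ((g, b).1 • (g, b).2)) ↔ U₀ (h • (g, b).2)
      rw [← mul_smul]
      rw [← heq]
  -- ultrafilter limit
  choose fd hfd1 hfd2 hfd3 hfd4 using finitary
  have hne : (Filter.atTop : Filter (Finset ((ℚ ≃o ℚ) × B))).NeBot := Filter.atTop_neBot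
  set 𝒱 : Ultrafilter (Finset ((ℚ ≃o ℚ) × B)) := Ultrafilter.of Filter.atTop with h𝒱def
  have h𝒱 : ∀ s : Set (Finset ((ℚ ≃o ℚ) × B)), s ∈ (Filter.atTop : Filter (Finset ((ℚ ≃o ℚ) × B))) → s ∈ 𝒱 :=
    fun s hs => Filter.le_def.mp (Ultrafilter.of_le _) s hs
  set U : B → Prop := fun b => {d | fd d b} ∈ 𝒱 with hU
  have hUtop : U ⊤ := by
    have : {d : Finset ((ℚ ≃o ℚ) × B) | fd d ⊤} = Set.univ := by
      ext d; simp [hfd1]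
    rw [hU]; simp only [this]; exact Filter.univ_mem
  have hUinf : ∀ a b : B, U (a ⊓ b) ↔ U a ∧ U b := by
    intro a b
    have hset : {d : Finset ((ℚ ≃o ℚ) × B) | fd d (a ⊓ b)} = {d | fd d a} ∩ {d | fd d b} := by
      ext d; simp [hfd2, Set.mem_inter_iff]
    rw [hU]; simp only [hset]
    exact Filter.inter_mem_iff
  have hUcompl : ∀ a : B, U aᶜ ↔ ¬ U a := by
    intro a
    have hset : {d : Finset ((ℚ ≃o ℚ) × B) | fd d aᶜ} = {d | fd d a}ᶜ := by
      ext d; simp [hfd3]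
    rw [hU]; simp only [hset]
    exact Ultrafilter.compl_mem_iff_notMem
  have hUinv : ∀ (g : ℚ ≃o ℚ) (b : B), U (g • b) ↔ U b := by
    intro g b
    set L : Set (Finset ((ℚ ≃o ℚ) × B)) := {d | (g, b) ∈ d} with hL
    have hLmem : L ∈ 𝒱 := by
      apply h𝒱
      apply Filter.mem_of_superset (Filter.Ici_mem_atTop ({(g, b)} : Finset ((ℚ ≃o ℚ) × B)))
      intro d hd
      exact hd (Finset.mem_singleton_self _)
    have interIff : ∀ A : Set (Finset ((ℚ ≃o ℚ) × B)), (A ∈ 𝒱 ↔ A ∩ L ∈ 𝒱) := fun A =>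
      ⟨fun hA => Filter.inter_mem hA hLmem, fun hA => Filter.mem_of_superset hA
        Set.inter_subset_left⟩
    have hset : {d : Finset ((ℚ ≃o ℚ) × B) | fd d (g • b)} ∩ L = {d | fd d b} ∩ L := by
      ext d
      simp only [Set.mem_inter_iff, Set.mem_setOf_eq, hL]
      constructor
      · rintro ⟨h1, h2⟩
        exact ⟨(hfd4 d (g, b) h2).mp h1, h2⟩
      · rintro ⟨h1, h2⟩
        exact ⟨(hfd4 d (g, b) h2).mpr h1, h2⟩
    rw [hU]
    simp only []
    rw [interIff {d | fd d (g • b)}, interIff {d | fd d b}, hset]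
  -- conclusion
  refine ⟨{b : B | ¬ U b}, ?_, ?_, ?_, ?_, ?_⟩
  · intro a b hab hb ha
    have : a ⊓ b = a := inf_eq_left.mpr hab
    exact hb ((hUinf a b).mp (by rw [this]; exact ha)).2
  · intro a b ha hb hab
    have h1 : U aᶜ := (hUcompl a).mpr ha
    have h2 : U bᶜ := (hUcompl b).mpr hb
    have h3 : U (aᶜ ⊓ bᶜ) := (hUinf _ _).mpr ⟨h1, h2⟩
    rw [← compl_sup] at h3
    exact ((hUcompl _).mp h3) hab
  · intro hIuniv
    have : ⊤ ∈ {b : B | ¬ U b} := hIuniv ▸ Set.mem_univ (⊤ : B)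
    exact this hUtop
  · intro b
    by_cases hb : U b
    · right
      exact fun h => ((hUcompl b).mp h) hb
    · left
      exact hb
  · intro g b
    constructor
    · exact fun h1 h2 => h1 ((hUinv g b).mp h2)
    · exact fun h1 h2 => h1 ((hUinv g b).mpr h2)
end

section
/- If a topological group G is extremely amenable, then every nontrivial G-Boolean algebra admits a G-invariant prime ideal. -/
universe u v

/-! Realise the Stone space of `B` as the set of Boolean homomorphisms `x : B → Bool`, a nonempty
closed subset of the compact space `B → Bool`. It is invariant under the action
`(g • x) b = x (g⁻¹ • b)`, which is continuous because stabilisers in `B` are open. Extreme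
amenability gives a fixed homomorphism `x`, and `{b | x b = false}` is the invariant prime ideal. -/

section BooleanHom

variable {B C : Type*} [BooleanAlgebra B] [BooleanAlgebra C]

structure IsBooleanHom (x : B → Bool) : Prop where
  map_inf : ∀ a b, x (a ⊓ b) = x a ⊓ x b
  map_compl : ∀ a, x aᶜ = (x a)ᶜ

namespace IsBooleanHom

variable {x : B → Bool}

theorem map_bot (hx : IsBooleanHom x) : x ⊥ = false := by
  have h := hx.map_inf ⊥ ⊥ᶜ
  rwa [inf_compl_eq_bot, hx.map_compl, inf_compl_eq_bot] at h

theorem map_top (hx : IsBooleanHom x) : x ⊤ = true := by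
  rw [← compl_bot, hx.map_compl, hx.map_bot]; rfl

theorem map_sup (hx : IsBooleanHom x) (a b : B) : x (a ⊔ b) = x a ⊔ x b := by
  rw [← compl_compl (a ⊔ b), compl_sup, hx.map_compl, hx.map_inf, hx.map_compl, hx.map_compl,
    compl_inf, compl_compl, compl_compl]

theorem monotone (hx : IsBooleanHom x) : Monotone x := fun a b hab => by
  rw [← inf_eq_left.2 hab, hx.map_inf]; exact inf_le_right

theorem comp (hx : IsBooleanHom x) {φ : C → B} (hφinf : ∀ a b, φ (a ⊓ b) = φ a ⊓ φ b)
    (hφcompl : ∀ a, φ aᶜ = (φ a)ᶜ) : IsBooleanHom (x ∘ φ) where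
  map_inf a b := by simp only [Function.comp_apply, hφinf, hx.map_inf]
  map_compl a := by simp only [Function.comp_apply, hφcompl, hx.map_compl]

end IsBooleanHom

theorem isClosed_setOf_isBooleanHom : IsClosed {x : B → Bool | IsBooleanHom x} := by
  have : {x : B → Bool | IsBooleanHom x} =
      (⋂ (a) (b), {x | x (a ⊓ b) = x a ⊓ x b}) ∩ ⋂ a, {x | x aᶜ = (x a)ᶜ} := by
    ext x
    simp only [Set.mem_ofPred_eq, Set.mem_inter_iff, Set.mem_iInter]
    exact ⟨fun hx => ⟨hx.map_inf, hx.map_compl⟩, fun ⟨h₁, h₂⟩ => ⟨h₁, h₂⟩⟩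
  rw [this]
  exact (isClosed_iInter fun a => isClosed_iInter fun b =>
    isClosed_eq (continuous_apply _) (by fun_prop)).inter
    (isClosed_iInter fun a => isClosed_eq (continuous_apply _) (by fun_prop))

theorem exists_isBooleanHom (h : (⊥ : B) ≠ ⊤) : ∃ x : B → Bool, IsBooleanHom x := by
  classical
  have : Nontrivial B := nontrivial_of_ne _ _ h
  obtain ⟨J, _⟩ := Order.Ideal.exists_maximal (P := B)
  have hJ : J.IsPrime := inferInstance
  have inf_mem_iff (a b : B) : a ⊓ b ∈ J ↔ a ∈ J ∨ b ∈ J :=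
    ⟨hJ.mem_or_mem, fun h => h.elim (J.lower inf_le_left) (J.lower inf_le_right)⟩
  have compl_mem_iff (a : B) : aᶜ ∈ J ↔ a ∉ J :=
    ⟨fun hc ha => hJ.top_notMem (sup_compl_eq_top (x := a) ▸ J.sup_mem ha hc),
      hJ.compl_mem_of_notMem⟩
  refine ⟨fun b => decide (b ∉ J), fun a b => ?_, fun a => ?_⟩
  · by_cases ha : a ∈ J <;> by_cases hb : b ∈ J <;> simp [ha, hb, inf_mem_iff]
  · by_cases ha : a ∈ J <;> simp [ha, compl_mem_iff]

end BooleanHom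

theorem ExtremelyAmenable.exists_fixed_mem_of_isClosed {G : Type u} [Group G]
    [TopologicalSpace G] (hG : ExtremelyAmenable.{u, v} G) {X : Type v} [TopologicalSpace X]
    [CompactSpace X] [T2Space X] [MulAction G X] [ContinuousSMul G X] {S : Set X} (hS : IsClosed S)
    (hne : S.Nonempty) (hinv : ∀ g : G, ∀ x ∈ S, g • x ∈ S) : ∃ x ∈ S, ∀ g : G, g • x = x := by
  let S' : SubMulAction G X := ⟨S, fun g _ hx => hinv g _ hx⟩
  have : CompactSpace S' := isCompact_iff_compactSpace.mp hS.isCompact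
  have : Nonempty S' := hne.to_subtype
  obtain ⟨x, hx⟩ := hG S' <| Continuous.subtype_mk (continuous_smul.comp
    (continuous_fst.prodMk (continuous_subtype_val.comp continuous_snd))) _
  exact ⟨x, x.2, fun g => congrArg Subtype.val (hx g)⟩

section ArrowAction

attribute [local instance] arrowAction

theorem continuousSMul_arrowAction {G A Y : Type*} [Group G] [TopologicalSpace G]
    [IsTopologicalGroup G] [MulAction G A] [TopologicalSpace Y]
    (h : ∀ a : A, IsOpen (MulAction.stabilizer G a : Set G)) : ContinuousSMul G (A → Y) := by
  let _ : TopologicalSpace A := ⊥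
  have : DiscreteTopology A := ⟨rfl⟩
  have : ContinuousSMul G A := continuousSMul_iff_stabilizer_isOpen.2 h
  have continuous_eval : Continuous fun p : (A → Y) × A => p.1 p.2 :=
    continuous_prod_of_discrete_right.2 fun a => continuous_apply a
  exact ⟨continuous_pi fun a => continuous_eval.comp
    (continuous_snd.prodMk ((continuous_inv.comp continuous_fst).smul continuous_const))⟩

end ArrowAction

theorem exists_isBooleanHom_forall_smul_eq {G : Type u} {B : Type v} [Group G]
    [TopologicalSpace G] [IsTopologicalGroup G] (hEA : ExtremelyAmenable.{u, v} G)
    [BooleanAlgebra B] [MulAction G B] (hinf : ∀ (g : G) (a b : B), g • (a ⊓ b) = g • a ⊓ g • b)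
    (hcompl : ∀ (g : G) (a : B), g • aᶜ = (g • a)ᶜ)
    (hstab : ∀ b : B, IsOpen (MulAction.stabilizer G b : Set G)) (hnt : (⊥ : B) ≠ ⊤) :
    ∃ x : B → Bool, IsBooleanHom x ∧ ∀ (g : G) (b : B), x (g • b) = x b := by
  let _ : MulAction G (B → Bool) := arrowAction
  have : ContinuousSMul G (B → Bool) := continuousSMul_arrowAction hstab
  obtain ⟨x, hx, hfix⟩ := hEA.exists_fixed_mem_of_isClosed isClosed_setOf_isBooleanHom
    (exists_isBooleanHom hnt) fun g _ hx => hx.comp (hinf g⁻¹) (hcompl g⁻¹)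
  refine ⟨x, hx, fun g b => ?_⟩
  have h : x (g⁻¹⁻¹ • b) = x b := congrFun (hfix g⁻¹) b
  rwa [inv_inv] at h

theorem stmt_13 {G : Type u} {B : Type v}
    [Group G] [TopologicalSpace G] [IsTopologicalGroup G]
    (hEA : ExtremelyAmenable.{u, v} G)
    [BooleanAlgebra B] [MulAction G B]
    (hinf : ∀ (g : G) (a b : B), g • (a ⊓ b) = g • a ⊓ g • b)
    (hcompl : ∀ (g : G) (a : B), g • aᶜ = (g • a)ᶜ)
    (hstab : ∀ b : B, IsOpen {g : G | g • b = b})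
    (hnt : (⊥ : B) ≠ ⊤) :
    ∃ I : Set B, (∀ a b : B, a ≤ b → b ∈ I → a ∈ I) ∧
      (∀ a b : B, a ∈ I → b ∈ I → a ⊔ b ∈ I) ∧ I ≠ Set.univ ∧
      (∀ b : B, b ∈ I ∨ bᶜ ∈ I) ∧ (∀ (g : G) (b : B), b ∈ I ↔ g • b ∈ I) := by
  obtain ⟨x, hx, hxG⟩ := exists_isBooleanHom_forall_smul_eq hEA hinf hcompl hstab hnt
  refine ⟨{b | x b = false}, fun a b hab (hb : x b = false) => ?_, fun a b ha hb => ?_, fun h => ?_,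
    fun b => ?_, fun g b => ?_⟩
  · exact Bool.eq_false_of_le_false (hb ▸ hx.monotone hab)
  · simp_all [hx.map_sup]
  · simpa [hx.map_top] using h.ge (Set.mem_univ ⊤)
  · cases hb : x b <;> simp [hx.map_compl, hb]
  · simp [hxG]
end

section
/- Converse characterization: let A be a countable type and let G be a subgroup of the permutation group of A that is closed in the topology of pointwise convergence, with the induced topology. Suppose that for every finite subset A₀ ⊆ A, writing H = {g ∈ G : ∀ a ∈ A₀, g a = a} for the pointwise stabilizer (an open subgroup of G), the following holds: for every set V with an H-action whose point stabilizers are open in H, every family of H-invariant relations R_V i ⊆ V^(n i), and every finite set D with relations R_D i ⊆ D^(n i), if there exists a homomorphism from (V, R_V) to (D, R_D) then there exists an H-equivariant homomorphism. Then G is extremely amenable, i.e., every continuous action of G on a nonempty compact Hausdorff space has a fixed point. -/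
/-
Fix a finite open cover `𝒰` of `X` and a finite `F ⊆ G`. By compactness and continuity of the
action there is a finite `A₀ ⊆ A` whose pointwise stabilizer moves no point of `X` out of some
member of `𝒰`. Let `v₀` be `A₀`, coded in `ℕ`, and colour the points `g • v₀` of its orbit by
members of `𝒰`; call a colouring realised by `x` if `g • v₀` always gets a member containing
`g⁻¹ • x`. The realised colourings form a nonempty invariant family, and the CSP whose
constraints are their restrictions to finite sets has the realised colourings as solutions. An
equivariant solution is constant on the orbit and agrees on `{k⁻¹ • v₀ | k ∈ F}` with a colouring
realised by some `x`, so `F • x` lies in a single member of `𝒰`. By compactness one point `x`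
has this property, up to closures, for all `𝒰` and `F` at once, and it is fixed: if `g • x ≠ x`,
a three-set cover separates `x` from `g • x`.
-/

universe u v w z y

/-- The topology of pointwise convergence on the permutation group of `A`:
the topology induced from the product topology on `A → A`, with `A` discrete. -/
instance permPtwiseTop (A : Type u) : TopologicalSpace (Equiv.Perm A) :=
  TopologicalSpace.induced (fun g : Equiv.Perm A => (g : A → A))
    (@Pi.topologicalSpace A (fun _ => A) (fun _ => ⊥))

/-- The pointwise stabilizer of a finite set `A₀ ⊆ A` inside a subgroup `G` of the
permutation group of `A`. -/
def pwStab {A : Type u} (G : Subgroup (Equiv.Perm A)) (A₀ : Finset A) : Subgroup G where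
  carrier := {g : G | ∀ a ∈ A₀, (g : Equiv.Perm A) a = a}
  one_mem' := fun a _ => rfl
  mul_mem' := by
    intro g h hg hh a ha
    simp only [Subgroup.coe_mul, Equiv.Perm.mul_apply, hh a ha, hg a ha]
  inv_mem' := by
    intro g hg a ha
    have h1 := hg a ha
    simp only [Subgroup.coe_inv]
    nth_rewrite 1 [← h1]
    exact Equiv.symm_apply_apply _ _


open Set Filter Topology Equiv

def IsFiniteOpenCover {X : Type*} [TopologicalSpace X] (𝒰 : Finset (Set X)) : Prop :=
  (∀ U ∈ 𝒰, IsOpen U) ∧ ⋃₀ (𝒰 : Set (Set X)) = univ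

theorem IsFiniteOpenCover.image₂_inter {X : Type*} [TopologicalSpace X] [DecidableEq (Set X)]
    {𝒰₁ 𝒰₂ : Finset (Set X)} (h₁ : IsFiniteOpenCover 𝒰₁) (h₂ : IsFiniteOpenCover 𝒰₂) :
    IsFiniteOpenCover (Finset.image₂ (· ∩ ·) 𝒰₁ 𝒰₂) := by
  refine ⟨fun U hU => ?_, eq_univ_of_forall fun x => ?_⟩
  · obtain ⟨U₁, hU₁, U₂, hU₂, rfl⟩ := Finset.mem_image₂.1 hU
    exact (h₁.1 U₁ hU₁).inter (h₂.1 U₂ hU₂)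
  · obtain ⟨U₁, hU₁, hx₁⟩ := mem_sUnion.1 (h₁.2.symm ▸ mem_univ x : x ∈ ⋃₀ (𝒰₁ : Set (Set X)))
    obtain ⟨U₂, hU₂, hx₂⟩ := mem_sUnion.1 (h₂.2.symm ▸ mem_univ x : x ∈ ⋃₀ (𝒰₂ : Set (Set X)))
    exact mem_sUnion.2 ⟨U₁ ∩ U₂, Finset.mem_image₂_of_mem hU₁ hU₂, hx₁, hx₂⟩

section FixedPoint

variable {G X : Type*} [Monoid G] [MulAction G X] [TopologicalSpace X]

theorem exists_forall_smul_mem_closure [ContinuousConstSMul G X] [CompactSpace X]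
    (h : ∀ 𝒰 : Finset (Set X), IsFiniteOpenCover 𝒰 →
      ∀ F : Finset G, ∃ x : X, ∃ U ∈ 𝒰, ∀ g ∈ F, g • x ∈ U) :
    ∃ x : X, ∀ 𝒰 : Finset (Set X), IsFiniteOpenCover 𝒰 →
      ∀ F : Finset G, ∃ U ∈ 𝒰, ∀ g ∈ F, g • x ∈ closure U := by
  classical
  let Z (p : Finset G × {𝒰 : Finset (Set X) // IsFiniteOpenCover 𝒰}) : Set X :=
    {x | ∃ U ∈ p.2.1, ∀ g ∈ p.1, g • x ∈ closure U}
  have hZclosed p : IsClosed (Z p) := by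
    have : Z p = ⋃ U ∈ p.2.1, ⋂ g ∈ p.1, (g • ·) ⁻¹' closure U := by
      ext
      simp [Z]
    rw [this]
    exact isClosed_biUnion_finset fun U _ =>
      isClosed_biInter fun g _ => isClosed_closure.preimage (continuous_const_smul g)
  have hZne p : (Z p).Nonempty := by
    obtain ⟨x, U, hU, hx⟩ := h p.2.1 p.2.2 p.1
    exact ⟨x, U, hU, fun g hg => subset_closure (hx g hg)⟩
  have hZdir : Directed (· ⊇ ·) Z := by
    rintro ⟨F₁, 𝒰₁, h₁⟩ ⟨F₂, 𝒰₂, h₂⟩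
    refine ⟨⟨F₁ ∪ F₂, _, h₁.image₂_inter h₂⟩, ?_, ?_⟩ <;> rintro x ⟨_, hU, hx⟩ <;>
      obtain ⟨U₁, hU₁, U₂, hU₂, rfl⟩ := Finset.mem_image₂.1 hU
    · exact ⟨U₁, hU₁, fun g hg =>
        closure_mono inter_subset_left (hx g (Finset.mem_union_left _ hg))⟩
    · exact ⟨U₂, hU₂, fun g hg =>
        closure_mono inter_subset_right (hx g (Finset.mem_union_right _ hg))⟩
  have : Nonempty {𝒰 : Finset (Set X) // IsFiniteOpenCover 𝒰} := ⟨{univ}, by simp, by simp⟩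
  obtain ⟨x, hx⟩ := IsCompact.nonempty_iInter_of_directed_nonempty_isCompact_isClosed Z hZdir
    hZne (fun p => (hZclosed p).isCompact) hZclosed
  exact ⟨x, fun 𝒰 h𝒰 F => mem_iInter.1 hx (F, ⟨𝒰, h𝒰⟩)⟩

theorem smul_eq_self_of_forall_smul_mem_closure [T3Space X] {x : X}
    (hx : ∀ 𝒰 : Finset (Set X), IsFiniteOpenCover 𝒰 →
      ∀ F : Finset G, ∃ U ∈ 𝒰, ∀ g ∈ F, g • x ∈ closure U) (g : G) :
    g • x = x := by
  classical
  by_contra hne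
  obtain ⟨P, Q, hP, hQ, hxP, hgQ, hPQ⟩ := t2_separation (Ne.symm hne)
  obtain ⟨t, ht, htc, htP⟩ := exists_mem_nhds_isClosed_subset (hP.mem_nhds hxP)
  -- No closure of a member of this cover contains both `x` and `g • x`.
  have hcover : IsFiniteOpenCover ({P, Q, tᶜ} : Finset (Set X)) := by
    refine ⟨by simp [hP, hQ, htc.isOpen_compl], eq_univ_of_forall fun y => ?_⟩
    by_cases hy : y ∈ t
    exacts [⟨P, by simp, htP hy⟩, ⟨tᶜ, by simp, hy⟩]
  obtain ⟨U, hU, hxU⟩ := hx _ hcover {1, g}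
  have h1 := one_smul G x ▸ hxU 1 (by simp)
  have hg := hxU g (by simp)
  simp only [Finset.mem_insert, Finset.mem_singleton] at hU
  rcases hU with rfl | rfl | rfl
  · exact disjoint_left.1 (hPQ.closure_left hQ) hg hgQ
  · exact disjoint_left.1 (hPQ.closure_right hP) hxP h1
  · rw [closure_compl] at h1
    exact h1 (mem_interior_iff_mem_nhds.2 ht)

end FixedPoint

theorem exists_mem_nhds_one_forall_smul_mem {G X : Type*} [Monoid G] [TopologicalSpace G]
    [TopologicalSpace X] [MulAction G X] [ContinuousSMul G X] [CompactSpace X]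
    {𝒰 : Set (Set X)} (hopen : ∀ U ∈ 𝒰, IsOpen U) (hcover : ⋃₀ 𝒰 = univ) :
    ∃ W ∈ 𝓝 (1 : G), ∀ y : X, ∃ U ∈ 𝒰, ∀ g ∈ W, g • y ∈ U := by
  have hloc (y : X) : ∃ U ∈ 𝒰, ∃ W ∈ 𝓝 (1 : G), ∃ O ∈ 𝓝 y, ∀ g ∈ W, ∀ x ∈ O, g • x ∈ U := by
    obtain ⟨U, hU, hyU⟩ := mem_sUnion.1 (hcover.symm ▸ mem_univ y : y ∈ ⋃₀ 𝒰)
    have hcont := (continuous_smul : Continuous fun p : G × X => p.1 • p.2).continuousAt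
      (x := (1, y))
    obtain ⟨W, hW, O, hO, hWO⟩ := mem_nhds_prod_iff.1
      (hcont ((hopen U hU).mem_nhds (by simpa using hyU)))
    exact ⟨U, hU, W, hW, O, hO, fun g hg x hx => hWO (mk_mem_prod hg hx)⟩
  choose U hU W hW O hO hWO using hloc
  obtain ⟨t, -, ht⟩ := isCompact_univ.elim_nhds_subcover O fun y _ => hO y
  refine ⟨⋂ y ∈ t, W y, (biInter_finset_mem t).2 fun y _ => hW y, fun x => ?_⟩
  obtain ⟨y, hy, hxy⟩ := mem_iUnion₂.1 (ht (mem_univ x))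
  exact ⟨U y, hU y, fun g hg => hWO y g (mem_iInter₂.1 hg y hy) x hxy⟩

def HasEquivariantHoms (H : Type*) [Group H] [TopologicalSpace H] : Prop :=
  ∀ (ι : Type v) (V : Type w) (D : Type z) (n : ι → ℕ) [MulAction H V] [Finite D]
    (RV : ∀ i, (Fin (n i) → V) → Prop) (RD : ∀ i, (Fin (n i) → D) → Prop),
    (∀ v : V, IsOpen {h : H | h • v = v}) →
    (∀ i (x : Fin (n i) → V) (h : H), RV i x → RV i (fun k => h • x k)) →
    (∃ f : V → D, ∀ i (x : Fin (n i) → V), RV i x → RD i (f ∘ x)) →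
    ∃ f : V → D, (∀ i (x : Fin (n i) → V), RV i x → RD i (f ∘ x)) ∧
      ∀ (h : H) (v : V), f (h • v) = f v

theorem HasEquivariantHoms.exists_invariant_forall_finset_eqOn {H : Type*} [Group H]
    [TopologicalSpace H] (hH : HasEquivariantHoms.{v, w, z} H) {V D : Type} [MulAction H V]
    [Finite D] (hV : ∀ v : V, IsOpen {h : H | h • v = v}) {K : Set (V → D)} (hK : K.Nonempty)
    (hKinv : ∀ χ ∈ K, ∀ h : H, (fun v => χ (h • v)) ∈ K) :
    ∃ f : V → D, (∀ (h : H) (v : V), f (h • v) = f v) ∧ ∀ s : Finset V, ∃ χ ∈ K, EqOn χ f s := by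
  let tuple (s : Finset V) (l : Fin s.card) : V := s.equivFin.symm l
  obtain ⟨χ₀, hχ₀⟩ := hK
  -- One relation per finite subset `s`: the orbit of its enumeration, resp. its colourings by `K`.
  obtain ⟨f, hf, hfinv⟩ := hH (ULift (Finset V)) (ULift V) (ULift D) (fun s => s.down.card)
    (fun s x => ∃ h : H, ∀ l, (x l).down = h • tuple s.down l)
    (fun s d => ∃ χ ∈ K, ∀ l, (d l).down = χ (tuple s.down l))
    (fun v => by simpa only [ULift.ext_iff, ULift.smul_down] using hV v.down)
    (fun s x h' ⟨h, hx⟩ => ⟨h' * h, fun l => by simp [hx l, mul_smul]⟩)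
    ⟨fun v => ⟨χ₀ v.down⟩, fun s x ⟨h, hx⟩ => ⟨_, hKinv χ₀ hχ₀ h, fun l => by simp [hx l]⟩⟩
  refine ⟨fun v => (f ⟨v⟩).down, fun h v => congrArg ULift.down (hfinv h ⟨v⟩), fun s => ?_⟩
  obtain ⟨χ, hχ, hχf⟩ := hf ⟨s⟩ (fun l => ⟨tuple s l⟩) ⟨1, fun l => (one_smul H _).symm⟩
  refine ⟨χ, hχ, fun v hv => ?_⟩
  simpa [tuple] using (hχf (s.equivFin ⟨v, hv⟩)).symm

section RealizedColorings

variable (G : Type*) {V D X : Type*} [Group G] [MulAction G V] [MulAction G X]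

def realizedColorings (v₀ : V) (c : D → Set X) : Set (V → D) :=
  {χ | ∃ x : X, ∀ g : G, g⁻¹ • x ∈ c (χ (g • v₀))}

variable {G}

theorem comp_smul_mem_realizedColorings {v₀ : V} {c : D → Set X} {χ : V → D}
    (hχ : χ ∈ realizedColorings G v₀ c) (h : G) :
    (fun v => χ (h • v)) ∈ realizedColorings G v₀ c := by
  obtain ⟨x, hx⟩ := hχ
  refine ⟨h⁻¹ • x, fun g => ?_⟩
  have := hx (h * g)
  rwa [mul_inv_rev, mul_smul, mul_smul] at this

theorem realizedColorings_nonempty [Nonempty X] {v₀ : V} {c : D → Set X}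
    (hc : ∀ y : X, ∃ d, ∀ g : G, g • v₀ = v₀ → g • y ∈ c d) :
    (realizedColorings G v₀ c).Nonempty := by
  classical
  obtain ⟨x₀⟩ := ‹Nonempty X›
  choose d hd using hc
  refine ⟨Function.extend (· • v₀) (fun g : G => d (g⁻¹ • x₀)) (fun _ => d x₀), x₀, fun g => ?_⟩
  have hex : ∃ g', g' • v₀ = g • v₀ := ⟨g, rfl⟩
  rw [Function.extend_def, dif_pos hex]
  set g' := Classical.choose hex
  have hstab : (g⁻¹ * g') • v₀ = v₀ := by
    rw [mul_smul, Classical.choose_spec hex, inv_smul_smul]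
  simpa [mul_smul] using hd (g'⁻¹ • x₀) (g⁻¹ * g') hstab

end RealizedColorings

theorem HasEquivariantHoms.exists_smul_mem_of_finite_open_cover {G X : Type*} {N : Type}
    [Group G] [TopologicalSpace G] [MulAction G N] [TopologicalSpace X] [MulAction G X]
    [ContinuousSMul G X] [CompactSpace X] [Nonempty X] (hG : HasEquivariantHoms.{v, w, z} G)
    (hN : ∀ n : N, IsOpen {g : G | g • n = n})
    (hbasis : ∀ W ∈ 𝓝 (1 : G), ∃ s : Finset N, {g : G | ∀ n ∈ s, g • n = n} ⊆ W)
    {𝒰 : Finset (Set X)} (h𝒰 : IsFiniteOpenCover 𝒰) (F : Finset G) :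
    ∃ x : X, ∃ U ∈ 𝒰, ∀ g ∈ F, g • x ∈ U := by
  classical
  obtain ⟨W, hW, hWU⟩ := exists_mem_nhds_one_forall_smul_mem (G := G) h𝒰.1 h𝒰.2
  obtain ⟨s, hs⟩ := hbasis W hW
  let v₀ : s → N := Subtype.val
  let c (d : Fin 𝒰.card) : Set X := 𝒰.equivFin.symm d
  have hV (v : s → N) : IsOpen {g : G | g • v = v} := by
    simpa only [funext_iff, Pi.smul_apply, ofPred_forall] using
      isOpen_iInter_of_finite fun i => hN (v i)
  have hc (y : X) : ∃ d, ∀ g : G, g • v₀ = v₀ → g • y ∈ c d := by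
    obtain ⟨U, hU, hyU⟩ := hWU y
    refine ⟨𝒰.equivFin ⟨U, hU⟩, fun g hg => ?_⟩
    simpa [c] using hyU g (hs fun n hn => congrFun hg ⟨n, hn⟩)
  obtain ⟨f, hfinv, hf⟩ := hG.exists_invariant_forall_finset_eqOn hV
    (realizedColorings_nonempty hc) fun χ hχ h => comp_smul_mem_realizedColorings hχ h
  obtain ⟨χ, ⟨x, hx⟩, hχf⟩ := hf (F.image fun g => g⁻¹ • v₀)
  refine ⟨x, c (f v₀), (𝒰.equivFin.symm _).2, fun g hg => ?_⟩
  have := hx g⁻¹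
  rwa [inv_inv, hχf (Finset.mem_coe.2 (Finset.mem_image_of_mem _ hg)), hfinv] at this

namespace Equiv.Perm

variable {A : Type u}

theorem isOpen_setOf_apply_eq (a b : A) : IsOpen {g : Perm A | g a = b} := by
  let _ : TopologicalSpace A := ⊥
  have : DiscreteTopology A := ⟨rfl⟩
  have hev : Continuous fun g : Perm A => g a := (continuous_apply a).comp continuous_induced_dom
  exact (isOpen_discrete {b}).preimage hev

theorem exists_finset_fixingSet_subset {W : Set (Perm A)} (hW : W ∈ 𝓝 (1 : Perm A)) :
    ∃ A₀ : Finset A, {g : Perm A | ∀ a ∈ A₀, g a = a} ⊆ W := by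
  let _ : TopologicalSpace A := ⊥
  rw [show 𝓝 (1 : Perm A) = comap (fun g : Perm A => (g : A → A)) (𝓝 id) from nhds_induced _ _,
    nhds_pi] at hW
  obtain ⟨t, ht, htW⟩ := mem_comap.1 hW
  obtain ⟨I, hI, t', ht', hsub⟩ := Filter.mem_pi.1 ht
  refine ⟨hI.toFinset, fun g hg => htW (hsub fun a ha => ?_)⟩
  show g a ∈ t' a
  rw [hg a (hI.mem_toFinset.2 ha)]
  exact mem_of_mem_nhds (ht' a)

end Equiv.Perm

namespace Function.Embedding

variable {A : Type u} {N : Type*}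

noncomputable def extendPermHom (e : A ↪ N) : Perm A →* Perm N := by
  classical exact Perm.extendDomainHom (Equiv.ofInjective e e.injective)

theorem extendPermHom_apply_self (e : A ↪ N) (g : Perm A) (a : A) :
    e.extendPermHom g (e a) = e (g a) := by
  classical
  simpa [extendPermHom] using
    Perm.extendDomain_apply_image g (Equiv.ofInjective e e.injective) a

theorem extendPermHom_apply_of_notMem (e : A ↪ N) (g : Perm A) {n : N} (hn : n ∉ range e) :
    e.extendPermHom g n = n := by
  classical
  exact Perm.extendDomain_apply_not_subtype g (Equiv.ofInjective e e.injective) hn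

theorem isOpen_setOf_extendPermHom_apply_eq (e : A ↪ N) (n : N) :
    IsOpen {g : Perm A | e.extendPermHom g n = n} := by
  by_cases hn : n ∈ range e
  · obtain ⟨a, rfl⟩ := hn
    simpa only [extendPermHom_apply_self, e.injective.eq_iff] using Perm.isOpen_setOf_apply_eq a a
  · simp [extendPermHom_apply_of_notMem e _ hn]

theorem exists_finset_fixingSet_subset_of_isInducing {H : Type*} [Group H] [TopologicalSpace H]
    (e : A ↪ N) {φ : H →* Perm A} (hφ : IsInducing φ) {W : Set H} (hW : W ∈ 𝓝 (1 : H)) :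
    ∃ s : Finset N, {h : H | ∀ n ∈ s, e.extendPermHom (φ h) n = n} ⊆ W := by
  rw [hφ.nhds_eq_comap, map_one] at hW
  obtain ⟨W', hW', hW'W⟩ := mem_comap.1 hW
  obtain ⟨A₀, hA₀⟩ := Perm.exists_finset_fixingSet_subset hW'
  refine ⟨A₀.map e, fun h hh => hW'W (hA₀ fun a ha => e.injective ?_)⟩
  rw [← extendPermHom_apply_self]
  exact hh _ (Finset.mem_map_of_mem e ha)

end Function.Embedding

theorem stmt_14_general {A : Type u} [Countable A] (G : Subgroup (Equiv.Perm A))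
    (hcsp : ∀ (A₀ : Finset A) (ι : Type v) (V : Type w) (D : Type z) (n : ι → ℕ)
      [MulAction (pwStab G A₀) V] [Finite D]
      (RV : ∀ i, (Fin (n i) → V) → Prop) (RD : ∀ i, (Fin (n i) → D) → Prop),
      (∀ v : V, IsOpen {h : pwStab G A₀ | h • v = v}) →
      (∀ i (x : Fin (n i) → V) (h : pwStab G A₀), RV i x → RV i (fun k => h • x k)) →
      (∃ f : V → D, ∀ i (x : Fin (n i) → V), RV i x → RD i (f ∘ x)) →
      ∃ f : V → D, (∀ i (x : Fin (n i) → V), RV i x → RD i (f ∘ x)) ∧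
        ∀ (h : pwStab G A₀) (v : V), f (h • v) = f v) :
    ∀ (X : Type y) [TopologicalSpace X] [CompactSpace X] [T2Space X] [Nonempty X]
      [MulAction G X], Continuous (fun p : G × X => p.1 • p.2) →
      ∃ x : X, ∀ g : G, g • x = x := by
  intro X _ _ _ _ _ hcont
  have : ContinuousSMul G X := ⟨hcont⟩
  obtain ⟨f, hf⟩ := exists_injective_nat A
  let e : A ↪ ℕ := ⟨f, hf⟩
  let H := pwStab G ∅
  let φ : H →* Perm A := G.subtype.comp H.subtype
  have hφ : IsInducing φ := IsInducing.subtypeVal.comp IsInducing.subtypeVal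
  let _ : MulAction H ℕ := MulAction.compHom ℕ (e.extendPermHom.comp φ)
  obtain ⟨x, hx⟩ := exists_forall_smul_mem_closure (G := H) (X := X) fun _ h𝒰 F =>
    HasEquivariantHoms.exists_smul_mem_of_finite_open_cover (hcsp ∅)
      (fun n => (e.isOpen_setOf_extendPermHom_apply_eq n).preimage hφ.continuous)
      (fun _ hW => e.exists_finset_fixingSet_subset_of_isInducing hφ hW) h𝒰 F
  exact ⟨x, fun g => smul_eq_self_of_forall_smul_mem_closure hx
    (⟨g, fun a ha => absurd ha (Finset.notMem_empty a)⟩ : H)⟩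

theorem stmt_14 {A : Type u} [Countable A] (G : Subgroup (Equiv.Perm A))
    (hclosed : IsClosed (G : Set (Equiv.Perm A)))
    (hcsp : ∀ (A₀ : Finset A) (ι : Type v) (V : Type w) (D : Type z) (n : ι → ℕ)
      [MulAction (pwStab G A₀) V] [Finite D]
      (RV : ∀ i, (Fin (n i) → V) → Prop) (RD : ∀ i, (Fin (n i) → D) → Prop),
      (∀ v : V, IsOpen {h : pwStab G A₀ | h • v = v}) →
      (∀ i (x : Fin (n i) → V) (h : pwStab G A₀), RV i x → RV i (fun k => h • x k)) →
      (∃ f : V → D, ∀ i (x : Fin (n i) → V), RV i x → RD i (f ∘ x)) →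
      ∃ f : V → D, (∀ i (x : Fin (n i) → V), RV i x → RD i (f ∘ x)) ∧
        ∀ (h : pwStab G A₀) (v : V), f (h • v) = f v) :
    ∀ (X : Type y) [TopologicalSpace X] [CompactSpace X] [T2Space X] [Nonempty X]
      [MulAction G X], Continuous (fun p : G × X => p.1 • p.2) →
      ∃ x : X, ∀ g : G, g • x = x :=
  stmt_14_general G hcsp
end
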